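/- arXiv:2511.02571 — 9 statements merged into one kernel-verified Lean document; each statement's English description precedes it below -/
import Mathlib

section
/- Let I_1, …, I_N be i.i.d. Bernoulli(p) random variables with p ∈ [0,1], and define AP@k = (1/k) ∑_{i=1}^{k} ( (1/i) ∑_{j=1}^{i} I_j ) · I_i for 1 ≤ k ≤ N. Then E[AP@k] = p·( p + (1−p)·H_k/k ), where H_k = ∑_{i=1}^{k} 1/i. -/
open Finset MeasureTheory ProbabilityTheory

theorem expectation_APk_bernoulli {Ω : Type*} [MeasurableSpace Ω] (μ : Measure Ω)
    [IsProbabilityMeasure μ] (N : ℕ) (p : ℝ) (hp0 : 0 ≤ p) (hp1 : p ≤ 1)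
    (I : ℕ → Ω → ℝ) (hmeas : ∀ j, Measurable (I j))
    (h01 : ∀ j ω, I j ω = 0 ∨ I j ω = 1)
    (hbern : ∀ j, μ {ω | I j ω = 1} = ENNReal.ofReal p)
    (hindep : iIndepFun I μ)
    (k : ℕ) (hk : 1 ≤ k) (hkN : k ≤ N) :
    ∫ ω, (1 / (k : ℝ)) * ∑ i ∈ Icc 1 k,
        ((1 / (i : ℝ)) * ∑ j ∈ Icc 1 i, I j ω) * I i ω ∂μ =
      p * (p + (1 - p) * (∑ i ∈ Icc 1 k, (1 : ℝ) / i) / k) := by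
  have hk0 : (k : ℝ) ≠ 0 := Nat.cast_ne_zero.mpr (by omega)
  -- integrability of each I j
  have hIint : ∀ j, Integrable (I j) μ := fun j =>
    (integrable_const (1 : ℝ)).mono' (hmeas j).aestronglyMeasurable
      (ae_of_all _ fun ω => by rcases h01 j ω with h | h <;> simp [h])
  -- expectation of I j
  have hEI : ∀ j, ∫ ω, I j ω ∂μ = p := by
    intro j
    have hset : MeasurableSet {ω | I j ω = 1} := (hmeas j) (measurableSet_singleton 1)
    have heq : ∀ ω, I j ω = Set.indicator {ω | I j ω = 1} (fun _ => (1 : ℝ)) ω := by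
      intro ω
      rcases h01 j ω with h | h
      · rw [Set.indicator_of_notMem (by simp [Set.mem_setOf_eq, h]), h]
      · rw [Set.indicator_of_mem (by simpa [Set.mem_setOf_eq] using h), h]
    calc ∫ ω, I j ω ∂μ = ∫ ω, Set.indicator {ω | I j ω = 1} (fun _ => (1 : ℝ)) ω ∂μ :=
          integral_congr_ae (ae_of_all _ heq)
      _ = ((μ {ω | I j ω = 1}).toReal) • (1 : ℝ) := integral_indicator_const _ hset
      _ = p := by rw [hbern j, ENNReal.toReal_ofReal hp0]; simp
  -- integrability of products
  have hprodInt : ∀ j i, Integrable (fun ω => I j ω * I i ω) μ := fun j i =>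
    (integrable_const (1 : ℝ)).mono' ((hmeas j).mul (hmeas i)).aestronglyMeasurable
      (ae_of_all _ fun ω => by
        rcases h01 j ω with h | h <;> rcases h01 i ω with h' | h' <;> simp [h, h'])
  -- expectation of products for distinct indices
  have hEprod : ∀ j i, j ≠ i → ∫ ω, I j ω * I i ω ∂μ = p * p := by
    intro j i hji
    have := (hindep.indepFun hji).integral_mul_eq_mul_integral (hIint j).aestronglyMeasurable
      (hIint i).aestronglyMeasurable
    simpa [hEI j, hEI i] using this
  -- expectation of I i * I i
  have hEsq : ∀ i, ∫ ω, I i ω * I i ω ∂μ = p := by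
    intro i
    have : ∀ ω, I i ω * I i ω = I i ω := fun ω => by
      rcases h01 i ω with h | h <;> simp [h]
    rw [integral_congr_ae (ae_of_all _ this), hEI i]
  -- rewrite each inner summand as a finite sum
  have hrw : ∀ i : ℕ, (fun ω => ((1 / (i : ℝ)) * ∑ j ∈ Icc 1 i, I j ω) * I i ω)
      = fun ω => ∑ j ∈ Icc 1 i, (1 / (i : ℝ)) * (I j ω * I i ω) := by
    intro i; funext ω
    rw [mul_assoc, Finset.sum_mul, Finset.mul_sum]
  have hint2 : ∀ i : ℕ, Integrable (fun ω => ((1 / (i : ℝ)) * ∑ j ∈ Icc 1 i, I j ω) * I i ω) μ := by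
    intro i
    rw [hrw i]
    exact integrable_finset_sum _ fun j _ => (hprodInt j i).const_mul _
  have key : ∀ i ∈ Icc 1 k, ∫ ω, ((1 / (i : ℝ)) * ∑ j ∈ Icc 1 i, I j ω) * I i ω ∂μ
      = (1 / (i : ℝ)) * (((i : ℝ) - 1) * (p * p) + p) := by
    intro i hi
    have hi1 : 1 ≤ i := (mem_Icc.mp hi).1
    rw [hrw i, integral_finset_sum _ (fun j _ => (hprodInt j i).const_mul _)]
    simp only [integral_const_mul]
    rw [← Finset.mul_sum]
    congr 1
    have hmem : i ∈ Icc 1 i := mem_Icc.mpr ⟨hi1, le_refl i⟩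
    rw [← Finset.add_sum_erase _ _ hmem, hEsq i]
    have hsum : ∑ j ∈ (Icc 1 i).erase i, ∫ ω, I j ω * I i ω ∂μ
        = ∑ j ∈ (Icc 1 i).erase i, p * p := by
      refine Finset.sum_congr rfl fun j hj => hEprod j i (Finset.ne_of_mem_erase hj)
    rw [hsum, Finset.sum_const, Finset.card_erase_of_mem hmem, Nat.card_Icc]
    have : ((i + 1 - 1 - 1 : ℕ) : ℝ) = (i : ℝ) - 1 := by
      push_cast [Nat.sub_sub]
      rw [Nat.cast_sub (by omega)]
      push_cast; ring
    rw [nsmul_eq_mul, this]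
    ring
  rw [integral_const_mul, integral_finset_sum _ (fun i _ => hint2 i),
    Finset.sum_congr rfl key]
  have sumeq : ∀ i ∈ Icc 1 k, (1 / (i : ℝ)) * (((i : ℝ) - 1) * (p * p) + p)
      = p * p + (p - p * p) * (1 / (i : ℝ)) := by
    intro i hi
    have hi0 : (i : ℝ) ≠ 0 := Nat.cast_ne_zero.mpr (by have := (mem_Icc.mp hi).1; omega)
    field_simp
    ring
  rw [Finset.sum_congr rfl sumeq, Finset.sum_add_distrib, Finset.sum_const, ← Finset.mul_sum,
    Nat.card_Icc, nsmul_eq_mul]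
  have hcard : ((k + 1 - 1 : ℕ) : ℝ) = (k : ℝ) := by push_cast [Nat.add_sub_cancel]; ring
  rw [hcard]
  field_simp
end

section
/- Let I_1, …, I_N be i.i.d. Bernoulli(p) random variables and P@i = (1/i) ∑_{j=1}^{i} I_j. Then for each i, Var(P@i · I_i) = p(1−p)·( p² + p(3−2p)/i + (1−3p+p²)/i² ). -/
open Finset MeasureTheory ProbabilityTheory

theorem variance_precision_times_indicator_bernoulli {Ω : Type*} [MeasurableSpace Ω]
    (μ : Measure Ω) [IsProbabilityMeasure μ] (N : ℕ) (p : ℝ) (hp0 : 0 ≤ p) (hp1 : p ≤ 1)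
    (I : ℕ → Ω → ℝ) (hmeas : ∀ j, Measurable (I j))
    (h01 : ∀ j ω, I j ω = 0 ∨ I j ω = 1)
    (hbern : ∀ j, μ {ω | I j ω = 1} = ENNReal.ofReal p)
    (hindep : iIndepFun I μ)
    (i : ℕ) (hi : 1 ≤ i) (hiN : i ≤ N) :
    variance (fun ω => ((1 / (i : ℝ)) * ∑ j ∈ Icc 1 i, I j ω) * I i ω) μ =
      p * (1 - p) * (p ^ 2 + p * (3 - 2 * p) / i + (1 - 3 * p + p ^ 2) / (i : ℝ) ^ 2) := by
  obtain ⟨m, rfl⟩ : ∃ m, i = m + 1 := ⟨i - 1, (Nat.succ_pred_eq_of_pos hi).symm⟩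
  clear hi hiN
  -- basic facts about the indicators
  have habs : ∀ j ω, |I j ω| ≤ 1 := by
    intro j ω; rcases h01 j ω with h | h <;> rw [h] <;> norm_num
  have hint : ∀ {f : Ω → ℝ}, Measurable f → ∀ C, (∀ ω, |f ω| ≤ C) → Integrable f μ := by
    intro f hf C hC
    exact (integrable_const C).mono' hf.aestronglyMeasurable (ae_of_all _ hC)
  have hmul_le : ∀ j k (ω : Ω), |I j ω * I k ω| ≤ 1 := by
    intro j k ω
    rw [abs_mul]
    exact le_trans (mul_le_mul (habs j ω) (habs k ω) (abs_nonneg _) (by norm_num))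
      (by norm_num)
  have hintI : ∀ j, Integrable (I j) μ := fun j => hint (hmeas j) 1 (habs j)
  have hexpI : ∀ j, ∫ ω, I j ω ∂μ = p := by
    intro j
    have hset : MeasurableSet {ω | I j ω = 1} := (hmeas j) (measurableSet_singleton 1)
    have : (fun ω => I j ω) = Set.indicator {ω | I j ω = 1} (fun _ => (1 : ℝ)) := by
      funext ω
      rcases h01 j ω with h | h
      · rw [h, Set.indicator_of_notMem]; simp [Set.mem_setOf_eq, h]
      · rw [h, Set.indicator_of_mem]; exact h
    rw [this, integral_indicator_const _ hset, measureReal_def, hbern j, smul_eq_mul, mul_one,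
      ENNReal.toReal_ofReal hp0]
  have hsq : ∀ j ω, I j ω * I j ω = I j ω := by
    intro j ω; rcases h01 j ω with h | h <;> rw [h] <;> ring
  have hpair : ∀ j k, j ≠ k → ∫ ω, I j ω * I k ω ∂μ = p * p := by
    intro j k hjk
    rw [show (∫ ω, I j ω * I k ω ∂μ) = (∫ ω, I j ω ∂μ) * ∫ ω, I k ω ∂μ from
      (hindep.indepFun hjk).integral_fun_mul_eq_mul_integral (hintI j).aestronglyMeasurable (hintI k).aestronglyMeasurable, hexpI, hexpI]
  -- the partial sum T over Icc 1 m
  set T : Ω → ℝ := fun ω => ∑ j ∈ Icc 1 m, I j ω with hT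
  have hTmeas : Measurable T := by
    apply Finset.measurable_sum; intro j _; exact hmeas j
  have hTabs : ∀ ω, |T ω| ≤ m := by
    intro ω
    calc |T ω| ≤ ∑ j ∈ Icc 1 m, |I j ω| := Finset.abs_sum_le_sum_abs _ _
    _ ≤ ∑ j ∈ Icc 1 m, 1 := Finset.sum_le_sum fun j _ => habs j ω
    _ = m := by simp [Nat.card_Icc]
  have hTint : Integrable T μ := hint hTmeas m hTabs
  have hexpT : ∫ ω, T ω ∂μ = m * p := by
    rw [hT]
    rw [integral_finset_sum _ fun j _ => hintI j]
    simp [hexpI, Nat.card_Icc]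
  have hindepT : IndepFun T (I (m + 1)) μ := by
    have hsum : (∑ j ∈ Icc 1 m, I j) = T := by
      funext ω; rw [hT]; simp [Finset.sum_apply]
    have h := hindep.indepFun_finsetSum_of_notMem hmeas
      (s := Icc 1 m) (i := m + 1) (by simp)
    rwa [hsum] at h
  have hexpTI : ∫ ω, T ω * I (m + 1) ω ∂μ = m * p * p := by
    rw [show (∫ ω, T ω * I (m + 1) ω ∂μ) = (∫ ω, T ω ∂μ) * ∫ ω, I (m + 1) ω ∂μ from
      hindepT.integral_fun_mul_eq_mul_integral hTint.aestronglyMeasurable (hintI (m + 1)).aestronglyMeasurable, hexpT, hexpI]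
  have hTIint : Integrable (fun ω => T ω * I (m + 1) ω) μ := by
    refine hint (hTmeas.mul (hmeas (m + 1))) m fun ω => ?_
    rw [abs_mul]
    calc |T ω| * |I (m + 1) ω| ≤ m * 1 :=
          mul_le_mul (hTabs ω) (habs _ ω) (abs_nonneg _) (by positivity)
    _ = m := by ring
  -- E[T^2]
  have hT2int : Integrable (fun ω => T ω * T ω) μ := by
    refine hint (hTmeas.mul hTmeas) (m * m) fun ω => ?_
    rw [abs_mul]
    exact mul_le_mul (hTabs ω) (hTabs ω) (abs_nonneg _) (by positivity)
  have hexpT2 : ∫ ω, T ω * T ω ∂μ = m * p + m * (m - 1) * (p * p) := by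
    have h1 : (fun ω => T ω * T ω)
        = fun ω => ∑ j ∈ Icc 1 m, ∑ k ∈ Icc 1 m, I j ω * I k ω := by
      funext ω; rw [hT]; rw [Finset.sum_mul_sum]
    rw [h1, integral_finset_sum]
    · have h2 : ∀ j ∈ Icc 1 m, (∫ ω, ∑ k ∈ Icc 1 m, I j ω * I k ω ∂μ)
          = ∑ k ∈ Icc 1 m, ∫ ω, I j ω * I k ω ∂μ := by
        intro j _
        exact integral_finset_sum _ fun k _ =>
          hint ((hmeas j).mul (hmeas k)) 1 (hmul_le j k)
      rw [Finset.sum_congr rfl h2]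
      have h3 : ∀ j ∈ Icc 1 m, ∑ k ∈ Icc 1 m, (∫ ω, I j ω * I k ω ∂μ)
          = p + ((m : ℝ) - 1) * (p * p) := by
        intro j hj
        have h4 : ∀ k ∈ Icc 1 m, (∫ ω, I j ω * I k ω ∂μ)
            = (p * p) + (if k = j then p - p * p else 0) := by
          intro k _
          by_cases hk : k = j
          · subst hk
            rw [if_pos rfl]
            have : (fun ω => I k ω * I k ω) = fun ω => I k ω := funext fun ω => hsq k ω
            rw [this, hexpI]; ring
          · rw [hpair j k fun h => hk h.symm, if_neg hk]; ring
        rw [Finset.sum_congr rfl h4, Finset.sum_add_distrib, Finset.sum_ite_eq' _ j,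
          if_pos hj, Finset.sum_const, Nat.card_Icc]
        simp only [nsmul_eq_mul]
        push_cast
        ring
      rw [Finset.sum_congr rfl h3, Finset.sum_const, Nat.card_Icc]
      simp only [nsmul_eq_mul]
      push_cast
      ring
    · exact fun j _ => integrable_finset_sum _ fun k _ =>
        hint ((hmeas j).mul (hmeas k)) 1 (hmul_le j k)
  have hindepT2 : IndepFun (fun ω => T ω * T ω) (I (m + 1)) μ :=
    hindepT.comp (measurable_id.mul measurable_id) measurable_id
  have hexpT2I : ∫ ω, T ω * T ω * I (m + 1) ω ∂μ
      = (m * p + m * (m - 1) * (p * p)) * p := by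
    rw [show (∫ ω, T ω * T ω * I (m + 1) ω ∂μ)
        = (∫ ω, T ω * T ω ∂μ) * ∫ ω, I (m + 1) ω ∂μ from
      hindepT2.integral_fun_mul_eq_mul_integral hT2int.aestronglyMeasurable (hintI (m + 1)).aestronglyMeasurable, hexpT2, hexpI]
  have hT2Iint : Integrable (fun ω => T ω * T ω * I (m + 1) ω) μ := by
    refine hint ((hTmeas.mul hTmeas).mul (hmeas (m + 1))) (m * m) fun ω => ?_
    rw [abs_mul, abs_mul]
    calc |T ω| * |T ω| * |I (m + 1) ω| ≤ (m * m) * 1 := by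
          apply mul_le_mul _ (habs _ ω) (abs_nonneg _) (by positivity)
          exact mul_le_mul (hTabs ω) (hTabs ω) (abs_nonneg _) (by positivity)
    _ = m * m := by ring
  -- the random variable X
  set c : ℝ := 1 / ((m : ℝ) + 1) with hc
  set X : Ω → ℝ := fun ω => ((1 / ((m + 1 : ℕ) : ℝ)) * ∑ j ∈ Icc 1 (m + 1), I j ω)
      * I (m + 1) ω with hX
  have hXeq : ∀ ω, X ω = c * (T ω * I (m + 1) ω) + c * I (m + 1) ω := by
    intro ω
    rw [hX, hT]
    have hs : ∑ j ∈ Icc 1 (m + 1), I j ω = (∑ j ∈ Icc 1 m, I j ω) + I (m + 1) ω :=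
      Finset.sum_Icc_succ_top (Nat.le_add_left 1 m) _
    simp only [hs, hc]
    rcases h01 (m + 1) ω with h | h <;> rw [h] <;> push_cast <;> ring
  have hXeq' : X = fun ω => c * (T ω * I (m + 1) ω) + c * I (m + 1) ω := funext hXeq
  have hXsq : (fun ω => X ω ^ 2)
      = fun ω => c ^ 2 * (T ω * T ω * I (m + 1) ω)
        + (2 * c ^ 2) * (T ω * I (m + 1) ω) + c ^ 2 * I (m + 1) ω := by
    funext ω
    rw [hXeq ω]
    rcases h01 (m + 1) ω with h | h <;> rw [h] <;> ring
  have hXmeas : Measurable X := by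
    rw [hXeq']
    exact ((hTmeas.mul (hmeas _)).const_mul c).add ((hmeas _).const_mul c)
  have hc0 : 0 ≤ c := by rw [hc]; positivity
  have hc1 : c ≤ 1 := by
    rw [hc, div_le_one (by positivity)]
    have h0 : (0 : ℝ) ≤ (m : ℝ) := Nat.cast_nonneg m
    linarith
  have hcm : c * (m : ℝ) ≤ 1 := by
    rw [hc, div_mul_eq_mul_div, one_mul, div_le_one (by positivity)]
    linarith [Nat.cast_nonneg (α := ℝ) m]
  have hXabs : ∀ ω, |X ω| ≤ 2 := by
    intro ω
    rw [hXeq ω]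
    calc |c * (T ω * I (m + 1) ω) + c * I (m + 1) ω|
        ≤ |c * (T ω * I (m + 1) ω)| + |c * I (m + 1) ω| := abs_add_le _ _
    _ = c * |T ω| * |I (m + 1) ω| + c * |I (m + 1) ω| := by
        rw [abs_mul, abs_mul, abs_mul, abs_of_nonneg hc0]; ring
    _ ≤ c * (m : ℝ) * 1 + c * 1 := by
        gcongr
        · exact hTabs ω
        · exact habs _ ω
        · exact habs _ ω
    _ ≤ 2 := by nlinarith
  have hXmem : MemLp X 2 μ :=
    MemLp.of_bound hXmeas.aestronglyMeasurable 2 (ae_of_all _ fun ω => by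
      simpa [Real.norm_eq_abs] using hXabs ω)
  have hA : Integrable (fun ω => c * (T ω * I (m + 1) ω)) μ := hTIint.const_mul c
  have hB : Integrable (fun ω => c * I (m + 1) ω) μ := (hintI _).const_mul c
  have hEX : μ[X] = c * ((m : ℝ) * p * p) + c * p := by
    rw [hXeq', integral_add hA hB, integral_const_mul, integral_const_mul, hexpTI, hexpI]
  have hA2 : Integrable (fun ω => c ^ 2 * (T ω * T ω * I (m + 1) ω)) μ :=
    hT2Iint.const_mul _
  have hB2 : Integrable (fun ω => (2 * c ^ 2) * (T ω * I (m + 1) ω)) μ :=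
    hTIint.const_mul _
  have hC2 : Integrable (fun ω => c ^ 2 * I (m + 1) ω) μ := (hintI _).const_mul _
  have hAB2 : Integrable (fun ω => c ^ 2 * (T ω * T ω * I (m + 1) ω)
      + (2 * c ^ 2) * (T ω * I (m + 1) ω)) μ := hA2.add hB2
  have hEX2 : μ[X ^ 2] = c ^ 2 * (((m : ℝ) * p + (m : ℝ) * ((m : ℝ) - 1) * (p * p)) * p)
      + (2 * c ^ 2) * ((m : ℝ) * p * p) + c ^ 2 * p := by
    have hpow : X ^ 2 = fun ω => X ω ^ 2 := rfl
    rw [hpow, hXsq, integral_add hAB2 hC2, integral_add hA2 hB2,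
      integral_const_mul, integral_const_mul, integral_const_mul,
      hexpT2I, hexpTI, hexpI]
  rw [variance_eq_sub hXmem, hEX2, hEX]
  have hm1 : ((m : ℝ) + 1) ≠ 0 := by positivity
  rw [hc]
  push_cast
  field_simp
  ring
end

section
/- Let I_1, …, I_N be i.i.d. Bernoulli(p) random variables and P@i = (1/i) ∑_{j=1}^{i} I_j. Then for 1 ≤ i < l ≤ N, Cov(P@i·I_i, P@l·I_l) = (p²(1−p)/l)·( (1−2p)/i + 2p ). -/
open Finset MeasureTheory ProbabilityTheory

lemma aux_int01 {Ω : Type*} [MeasurableSpace Ω] (μ : Measure Ω) [IsProbabilityMeasure μ]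
    {g : Ω → ℝ} (hg : Measurable g) (hg01 : ∀ ω, g ω = 0 ∨ g ω = 1) :
    Integrable g μ := by
  refine (integrable_const (1:ℝ)).mono' hg.aestronglyMeasurable (ae_of_all _ fun ω => ?_)
  rcases hg01 ω with h | h <;> simp [h]

lemma aux_prod01 {Ω : Type*} (I : ℕ → Ω → ℝ) (h01 : ∀ j ω, I j ω = 0 ∨ I j ω = 1)
    (s : Finset ℕ) (ω : Ω) :
    (∏ k ∈ s, I k ω) = 0 ∨ (∏ k ∈ s, I k ω) = 1 := by
  by_cases h : ∃ k ∈ s, I k ω = 0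
  · obtain ⟨k, hk, hk0⟩ := h
    exact Or.inl (Finset.prod_eq_zero hk hk0)
  · push_neg at h
    refine Or.inr (Finset.prod_eq_one fun k hk => ?_)
    rcases h01 k ω with h0 | h1
    · exact absurd h0 (h k hk)
    · exact h1

lemma aux_collapse {Ω : Type*} (I : ℕ → Ω → ℝ) (h01 : ∀ j ω, I j ω = 0 ∨ I j ω = 1)
    (a : ℕ) (s : Finset ℕ) (ω : Ω) :
    I a ω * ∏ k ∈ s, I k ω = ∏ k ∈ insert a s, I k ω := by
  by_cases ha : a ∈ s
  · rw [Finset.insert_eq_self.2 ha]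
    rcases h01 a ω with h0 | h1
    · rw [h0, zero_mul, Finset.prod_eq_zero ha h0]
    · rw [h1, one_mul]
  · rw [Finset.prod_insert ha]

lemma aux_integral_I {Ω : Type*} [MeasurableSpace Ω] (μ : Measure Ω) [IsProbabilityMeasure μ]
    (p : ℝ) (I : ℕ → Ω → ℝ) (hmeas : ∀ j, Measurable (I j))
    (h01 : ∀ j ω, I j ω = 0 ∨ I j ω = 1)
    (hbern : ∀ j, μ {ω | I j ω = 1} = ENNReal.ofReal p)
    (hp0 : 0 ≤ p) (a : ℕ) : ∫ ω, I a ω ∂μ = p := by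
  have heq : I a = Set.indicator {ω | I a ω = 1} (fun _ => (1:ℝ)) := by
    funext ω
    rcases h01 a ω with h0 | h1
    · rw [h0, Set.indicator_of_notMem]
      simp [Set.mem_setOf_eq, h0]
    · rw [h1, Set.indicator_of_mem]
      exact h1
  have hms : MeasurableSet {ω | I a ω = 1} := hmeas a (measurableSet_singleton 1)
  rw [heq, integral_indicator_const _ hms,
    measureReal_def, hbern a, smul_eq_mul, mul_one, ENNReal.toReal_ofReal hp0]

lemma aux_E_prod {Ω : Type*} [MeasurableSpace Ω] (μ : Measure Ω) [IsProbabilityMeasure μ]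
    (p : ℝ) (I : ℕ → Ω → ℝ) (hmeas : ∀ j, Measurable (I j))
    (h01 : ∀ j ω, I j ω = 0 ∨ I j ω = 1)
    (hbern : ∀ j, μ {ω | I j ω = 1} = ENNReal.ofReal p)
    (hp0 : 0 ≤ p) (hindep : iIndepFun I μ)
    (s : Finset ℕ) : ∫ ω, ∏ k ∈ s, I k ω ∂μ = p ^ s.card := by
  induction s using Finset.induction_on with
  | empty => simp
  | @insert a s ha ih =>
    have hint_prod : Integrable (fun ω => ∏ k ∈ s, I k ω) μ :=
      aux_int01 μ (Finset.measurable_prod s fun k _ => hmeas k)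
        (aux_prod01 I h01 s)
    have hindep2 : IndepFun (fun ω => ∏ k ∈ s, I k ω) (I a) μ := by
      have h := hindep.indepFun_finsetProd_of_notMem hmeas ha
      have he : (∏ j ∈ s, I j) = fun ω => ∏ k ∈ s, I k ω := by
        funext ω; exact Finset.prod_apply ω s I
      rwa [he] at h
    have hmul : ∫ ω, (∏ k ∈ s, I k ω) * I a ω ∂μ =
        (∫ ω, ∏ k ∈ s, I k ω ∂μ) * ∫ ω, I a ω ∂μ :=
      hindep2.integral_fun_mul_eq_mul_integral hint_prod.aestronglyMeasurable
        (aux_int01 μ (hmeas a) (h01 a)).aestronglyMeasurable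
    have hpt : ∀ ω, (∏ k ∈ insert a s, I k ω) = (∏ k ∈ s, I k ω) * I a ω := by
      intro ω; rw [← aux_collapse I h01 a s ω, mul_comm]
    calc ∫ ω, ∏ k ∈ insert a s, I k ω ∂μ
        = ∫ ω, (∏ k ∈ s, I k ω) * I a ω ∂μ :=
          integral_congr_ae (ae_of_all _ fun ω => hpt ω)
      _ = p ^ s.card * p := by
          rw [hmul, ih, aux_integral_I μ p I hmeas h01 hbern hp0]
      _ = p ^ (insert a s).card := by
          rw [Finset.card_insert_of_notMem ha, pow_succ]

theorem covariance_precision_terms_bernoulli {Ω : Type*} [MeasurableSpace Ω]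
    (μ : Measure Ω) [IsProbabilityMeasure μ] (N : ℕ) (p : ℝ) (hp0 : 0 ≤ p) (hp1 : p ≤ 1)
    (I : ℕ → Ω → ℝ) (hmeas : ∀ j, Measurable (I j))
    (h01 : ∀ j ω, I j ω = 0 ∨ I j ω = 1)
    (hbern : ∀ j, μ {ω | I j ω = 1} = ENNReal.ofReal p)
    (hindep : iIndepFun I μ)
    (i l : ℕ) (hi : 1 ≤ i) (hil : i < l) (hlN : l ≤ N) :
    (∫ ω, (((1 / (i : ℝ)) * ∑ j ∈ Icc 1 i, I j ω) * I i ω) *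
          (((1 / (l : ℝ)) * ∑ r ∈ Icc 1 l, I r ω) * I l ω) ∂μ) -
      (∫ ω, ((1 / (i : ℝ)) * ∑ j ∈ Icc 1 i, I j ω) * I i ω ∂μ) *
      (∫ ω, ((1 / (l : ℝ)) * ∑ r ∈ Icc 1 l, I r ω) * I l ω ∂μ) =
      (p ^ 2 * (1 - p) / l) * ((1 - 2 * p) / i + 2 * p) := by
  have hmul01 : ∀ {f g : Ω → ℝ}, (∀ ω, f ω = 0 ∨ f ω = 1) → (∀ ω, g ω = 0 ∨ g ω = 1) →
      ∀ ω, f ω * g ω = 0 ∨ f ω * g ω = 1 := by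
    intro f g hf hg ω
    rcases hf ω with h | h <;> rcases hg ω with h' | h' <;> simp [h, h']
  have Int2 : ∀ a b : ℕ, Integrable (fun ω => I a ω * I b ω) μ := fun a b =>
    aux_int01 μ ((hmeas a).mul (hmeas b)) (hmul01 (h01 a) (h01 b))
  have Int4 : ∀ a b c d : ℕ, Integrable (fun ω => I a ω * I b ω * (I c ω * I d ω)) μ :=
    fun a b c d =>
    aux_int01 μ (((hmeas a).mul (hmeas b)).mul ((hmeas c).mul (hmeas d)))
      (hmul01 (hmul01 (h01 a) (h01 b)) (hmul01 (h01 c) (h01 d)))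
  have hJ2 : ∀ a b : ℕ, ∫ ω, I a ω * I b ω ∂μ = p ^ ({a, b} : Finset ℕ).card := by
    intro a b
    rw [← aux_E_prod μ p I hmeas h01 hbern hp0 hindep ({a, b} : Finset ℕ)]
    refine integral_congr_ae (ae_of_all _ fun ω => ?_)
    show I a ω * I b ω = ∏ k ∈ ({a, b} : Finset ℕ), I k ω
    rw [show I b ω = ∏ k ∈ ({b} : Finset ℕ), I k ω from (Finset.prod_singleton _ _).symm,
      aux_collapse I h01 a _ ω]
  have hJ : ∀ a b c d : ℕ, ∫ ω, I a ω * I b ω * (I c ω * I d ω) ∂μ =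
      p ^ ({a, b, c, d} : Finset ℕ).card := by
    intro a b c d
    rw [← aux_E_prod μ p I hmeas h01 hbern hp0 hindep ({a, b, c, d} : Finset ℕ)]
    refine integral_congr_ae (ae_of_all _ fun ω => ?_)
    show I a ω * I b ω * (I c ω * I d ω) = ∏ k ∈ ({a, b, c, d} : Finset ℕ), I k ω
    calc I a ω * I b ω * (I c ω * I d ω)
        = I a ω * (I b ω * (I c ω * I d ω)) := by ring
      _ = ∏ k ∈ ({a, b, c, d} : Finset ℕ), I k ω := by
          rw [show I d ω = ∏ k ∈ ({d} : Finset ℕ), I k ω from (Finset.prod_singleton _ _).symm,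
            aux_collapse I h01 c _ ω, aux_collapse I h01 b _ ω, aux_collapse I h01 a _ ω]
  -- first moments
  have hM : ∀ m : ℕ, 1 ≤ m →
      ∫ ω, ((1 / (m : ℝ)) * ∑ j ∈ Icc 1 m, I j ω) * I m ω ∂μ =
        (1 / (m : ℝ)) * (p + ((m : ℝ) - 1) * p ^ 2) := by
    intro m hm
    have hmem : m ∈ Icc 1 m := Finset.mem_Icc.2 ⟨hm, le_refl m⟩
    have hpt : ∀ ω, ((1 / (m : ℝ)) * ∑ j ∈ Icc 1 m, I j ω) * I m ω =
        (1 / (m : ℝ)) * ∑ j ∈ Icc 1 m, I j ω * I m ω := by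
      intro ω; rw [mul_assoc, Finset.sum_mul]
    calc ∫ ω, ((1 / (m : ℝ)) * ∑ j ∈ Icc 1 m, I j ω) * I m ω ∂μ
        = ∫ ω, (1 / (m : ℝ)) * ∑ j ∈ Icc 1 m, I j ω * I m ω ∂μ :=
          integral_congr_ae (ae_of_all _ hpt)
      _ = (1 / (m : ℝ)) * ∑ j ∈ Icc 1 m, ∫ ω, I j ω * I m ω ∂μ := by
          rw [integral_const_mul, integral_finset_sum _ fun j _ => Int2 j m]
      _ = (1 / (m : ℝ)) * ∑ j ∈ Icc 1 m, p ^ ({j, m} : Finset ℕ).card := by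
          rw [Finset.sum_congr rfl fun j _ => hJ2 j m]
      _ = (1 / (m : ℝ)) * (p + ((m : ℝ) - 1) * p ^ 2) := by
          congr 1
          rw [← Finset.add_sum_erase _ _ hmem]
          have h2 : ∀ j ∈ (Icc 1 m).erase m, p ^ ({j, m} : Finset ℕ).card = p ^ 2 := by
            intro j hj
            have hne : j ≠ m := Finset.ne_of_mem_erase hj
            rw [show ({j, m} : Finset ℕ).card = 2 by
              rw [Finset.card_insert_of_notMem (by simp [hne]), Finset.card_singleton]]
          rw [Finset.sum_congr rfl h2, Finset.sum_const, Finset.card_erase_of_mem hmem,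
            Nat.card_Icc, nsmul_eq_mul]
          have h' : m + 1 - 1 - 1 = m - 1 := by omega
          rw [h', Nat.cast_sub hm, Nat.cast_one]
          simp
  -- inner sum
  have key : ∀ j, j ∈ Icc 1 i → ∑ r ∈ Icc 1 l, (p : ℝ) ^ ({j, i, r, l} : Finset ℕ).card =
      (({j, i, l} : Finset ℕ).card : ℝ) * p ^ ({j, i, l} : Finset ℕ).card +
        ((l : ℝ) - (({j, i, l} : Finset ℕ).card : ℝ)) * p ^ (({j, i, l} : Finset ℕ).card + 1) := by
    intro j hj
    obtain ⟨hj1, hji⟩ := Finset.mem_Icc.1 hj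
    set s3 : Finset ℕ := {j, i, l} with hs3
    have hsub : s3 ⊆ Icc 1 l := by
      intro x hx
      simp only [hs3, Finset.mem_insert, Finset.mem_singleton] at hx
      rcases hx with rfl | rfl | rfl <;> exact Finset.mem_Icc.2 ⟨by omega, by omega⟩
    have hcle : s3.card ≤ l := by
      have := Finset.card_le_card hsub
      rwa [Nat.card_Icc, Nat.add_sub_cancel] at this
    have hre : ∀ r, ({j, i, r, l} : Finset ℕ) = insert r s3 := by
      intro r; ext x
      simp only [hs3, Finset.mem_insert, Finset.mem_singleton]
      tauto
    calc ∑ r ∈ Icc 1 l, (p : ℝ) ^ ({j, i, r, l} : Finset ℕ).card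
        = ∑ r ∈ Icc 1 l, p ^ (insert r s3).card :=
          Finset.sum_congr rfl fun r _ => by rw [hre r]
      _ = ∑ r ∈ Icc 1 l \ s3, p ^ (insert r s3).card + ∑ r ∈ s3, p ^ (insert r s3).card :=
          (Finset.sum_sdiff hsub).symm
      _ = ∑ r ∈ Icc 1 l \ s3, p ^ (s3.card + 1) + ∑ r ∈ s3, p ^ s3.card := by
          congr 1
          · exact Finset.sum_congr rfl fun r hr => by
              rw [Finset.card_insert_of_notMem (Finset.mem_sdiff.1 hr).2]
          · exact Finset.sum_congr rfl fun r hr => by rw [Finset.insert_eq_self.2 hr]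
      _ = ((l : ℝ) - (s3.card : ℝ)) * p ^ (s3.card + 1) + (s3.card : ℝ) * p ^ s3.card := by
          rw [Finset.sum_const, Finset.sum_const, Finset.card_sdiff_of_subset hsub, Nat.card_Icc,
            Nat.add_sub_cancel, nsmul_eq_mul, nsmul_eq_mul, Nat.cast_sub hcle]
      _ = _ := by ring
  have hiI : i ∈ Icc 1 i := Finset.mem_Icc.2 ⟨hi, le_refl i⟩
  have hsum2 : ∑ j ∈ Icc 1 i, ∑ r ∈ Icc 1 l, (p : ℝ) ^ ({j, i, r, l} : Finset ℕ).card =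
      (2 * p ^ 2 + ((l : ℝ) - 2) * p ^ 3) +
        ((i : ℝ) - 1) * (3 * p ^ 3 + ((l : ℝ) - 3) * p ^ 4) := by
    rw [← Finset.add_sum_erase _ _ hiI, key i hiI]
    have hc2 : ({i, i, l} : Finset ℕ).card = 2 := by
      rw [Finset.insert_idem,
        Finset.card_insert_of_notMem (by simp [Nat.ne_of_lt hil]), Finset.card_singleton]
    have herase : ∀ j ∈ (Icc 1 i).erase i,
        (∑ r ∈ Icc 1 l, (p : ℝ) ^ ({j, i, r, l} : Finset ℕ).card) =
          3 * p ^ 3 + ((l : ℝ) - 3) * p ^ 4 := by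
      intro j hj
      have hjne : j ≠ i := Finset.ne_of_mem_erase hj
      have hjmem : j ∈ Icc 1 i := Finset.mem_of_mem_erase hj
      obtain ⟨hj1, hji⟩ := Finset.mem_Icc.1 hjmem
      have hc3 : ({j, i, l} : Finset ℕ).card = 3 := by
        rw [Finset.card_insert_of_notMem (by simp; omega),
          Finset.card_insert_of_notMem (by simp; omega), Finset.card_singleton]
      rw [key j hjmem, hc3]
      push_cast; ring
    rw [Finset.sum_congr rfl herase, Finset.sum_const, Finset.card_erase_of_mem hiI,
      Nat.card_Icc, nsmul_eq_mul, hc2]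
    have h' : i + 1 - 1 - 1 = i - 1 := by omega
    rw [h', Nat.cast_sub hi, Nat.cast_one]
    push_cast; ring
  -- second moment
  have hint_inner : ∀ j : ℕ,
      Integrable (fun ω => ∑ r ∈ Icc 1 l, I j ω * I i ω * (I r ω * I l ω)) μ := fun j =>
    integrable_finset_sum _ fun r _ => Int4 j i r l
  have hLHS1 : ∫ ω, (((1 / (i : ℝ)) * ∑ j ∈ Icc 1 i, I j ω) * I i ω) *
        (((1 / (l : ℝ)) * ∑ r ∈ Icc 1 l, I r ω) * I l ω) ∂μ =
      (1 / (i : ℝ)) * ((1 / (l : ℝ)) *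
        ∑ j ∈ Icc 1 i, ∑ r ∈ Icc 1 l, (p : ℝ) ^ ({j, i, r, l} : Finset ℕ).card) := by
    have hpt : ∀ ω, (((1 / (i : ℝ)) * ∑ j ∈ Icc 1 i, I j ω) * I i ω) *
        (((1 / (l : ℝ)) * ∑ r ∈ Icc 1 l, I r ω) * I l ω) =
        (1 / (i : ℝ)) * ((1 / (l : ℝ)) *
          ∑ j ∈ Icc 1 i, ∑ r ∈ Icc 1 l, I j ω * I i ω * (I r ω * I l ω)) := by
      intro ω
      rw [← Finset.sum_mul_sum, ← Finset.sum_mul, ← Finset.sum_mul]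
      ring
    calc ∫ ω, (((1 / (i : ℝ)) * ∑ j ∈ Icc 1 i, I j ω) * I i ω) *
          (((1 / (l : ℝ)) * ∑ r ∈ Icc 1 l, I r ω) * I l ω) ∂μ
        = ∫ ω, (1 / (i : ℝ)) * ((1 / (l : ℝ)) *
            ∑ j ∈ Icc 1 i, ∑ r ∈ Icc 1 l, I j ω * I i ω * (I r ω * I l ω)) ∂μ :=
          integral_congr_ae (ae_of_all _ hpt)
      _ = (1 / (i : ℝ)) * ((1 / (l : ℝ)) *
            ∫ ω, ∑ j ∈ Icc 1 i, ∑ r ∈ Icc 1 l, I j ω * I i ω * (I r ω * I l ω) ∂μ) := by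
          rw [integral_const_mul, integral_const_mul]
      _ = (1 / (i : ℝ)) * ((1 / (l : ℝ)) *
            ∑ j ∈ Icc 1 i, ∑ r ∈ Icc 1 l, (p : ℝ) ^ ({j, i, r, l} : Finset ℕ).card) := by
          rw [integral_finset_sum _ fun j _ => hint_inner j]
          congr 2
          refine Finset.sum_congr rfl fun j _ => ?_
          rw [integral_finset_sum _ fun r _ => Int4 j i r l]
          exact Finset.sum_congr rfl fun r _ => hJ j i r l
  rw [hLHS1, hsum2, hM i hi, hM l (hi.trans hil.le)]
  have hi0 : (i : ℝ) ≠ 0 := Nat.cast_ne_zero.2 (by omega)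
  have hl0 : (l : ℝ) ≠ 0 := Nat.cast_ne_zero.2 (by omega)
  field_simp
  ring
end

section
/- Let I_1, …, I_N be i.i.d. Bernoulli(p) random variables and AP@k = (1/k) ∑_{i=1}^{k} ((1/i)∑_{j=1}^{i} I_j)·I_i. Then Var(AP@k) = (5/k)·p³(1−p) + (1/k²)·p(1−p)·[ p(1−2p)(3H_k + H_k²) + (1−p)(1−3p)·H_k^{(2)} ], where H_k = ∑_{i=1}^{k} 1/i and H_k^{(2)} = ∑_{i=1}^{k} 1/i². -/
open Finset MeasureTheory ProbabilityTheory

set_option linter.unusedSectionVars false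
set_option maxHeartbeats 1000000

section probAux
variable {Ω : Type*} [MeasurableSpace Ω] {I : ℕ → Ω → ℝ}

lemma prod_eq_ind (h01 : ∀ j ω, I j ω = 0 ∨ I j ω = 1) (T : Finset ℕ) (ω : Ω) :
    ∏ t ∈ T, I t ω = if ∀ t ∈ T, I t ω = 1 then 1 else 0 := by
  classical
  induction T using Finset.induction with
  | empty => simp
  | @insert b s hb ih =>
    rw [Finset.prod_insert hb, ih]
    rcases h01 b ω with h | h <;> simp [h, Finset.forall_mem_insert]

lemma prod_eq_indicator (h01 : ∀ j ω, I j ω = 0 ∨ I j ω = 1) (T : Finset ℕ) :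
    (fun ω => ∏ t ∈ T, I t ω) = Set.indicator (⋂ t ∈ T, I t ⁻¹' {1}) 1 := by
  classical
  funext ω
  rw [prod_eq_ind h01 T ω, Set.indicator_apply]
  simp [Set.mem_iInter, Pi.one_apply]

lemma mul2_eq_prod (h01 : ∀ j ω, I j ω = 0 ∨ I j ω = 1) (a b : ℕ) :
    (fun ω => I a ω * I b ω) = fun ω => ∏ t ∈ ({a, b} : Finset ℕ), I t ω := by
  classical
  funext ω
  rw [prod_eq_ind h01]
  rcases h01 a ω with ha | ha <;> rcases h01 b ω with hb | hb <;>
    simp [ha, hb, Finset.forall_mem_insert]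

lemma mul4_eq_prod (h01 : ∀ j ω, I j ω = 0 ∨ I j ω = 1) (a b c d : ℕ) :
    (fun ω => I a ω * I b ω * I c ω * I d ω)
      = fun ω => ∏ t ∈ ({a, b, c, d} : Finset ℕ), I t ω := by
  classical
  funext ω
  rw [prod_eq_ind h01]
  rcases h01 a ω with ha | ha <;> rcases h01 b ω with hb | hb <;>
    rcases h01 c ω with hc | hc <;> rcases h01 d ω with hd | hd <;>
    simp [ha, hb, hc, hd, Finset.forall_mem_insert]

variable {μ : Measure Ω} [IsProbabilityMeasure μ] {p : ℝ}

lemma measSet (hmeas : ∀ j, Measurable (I j)) (T : Finset ℕ) :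
    MeasurableSet (⋂ t ∈ T, I t ⁻¹' {1}) :=
  MeasurableSet.biInter (T.countable_toSet) fun t _ => (hmeas t) (measurableSet_singleton 1)

lemma integrable_prod (hmeas : ∀ j, Measurable (I j)) (h01 : ∀ j ω, I j ω = 0 ∨ I j ω = 1)
    (T : Finset ℕ) : Integrable (fun ω => ∏ t ∈ T, I t ω) μ := by
  rw [prod_eq_indicator h01 T]
  exact (integrable_const (1 : ℝ)).indicator (measSet hmeas T)

lemma memLp_prod (hmeas : ∀ j, Measurable (I j)) (h01 : ∀ j ω, I j ω = 0 ∨ I j ω = 1)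
    (T : Finset ℕ) : MemLp (fun ω => ∏ t ∈ T, I t ω) 2 μ := by
  rw [prod_eq_indicator h01 T]
  exact (memLp_const (1 : ℝ)).indicator (measSet hmeas T)

lemma integral_prod_I (hp0 : 0 ≤ p) (hmeas : ∀ j, Measurable (I j))
    (h01 : ∀ j ω, I j ω = 0 ∨ I j ω = 1)
    (hbern : ∀ j, μ {ω | I j ω = 1} = ENNReal.ofReal p)
    (hindep : iIndepFun I μ) (T : Finset ℕ) :
    ∫ ω, ∏ t ∈ T, I t ω ∂μ = p ^ T.card := by
  rw [prod_eq_indicator h01 T]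
  rw [MeasureTheory.integral_indicator_one (measSet hmeas T)]
  have h1 : μ (⋂ t ∈ T, I t ⁻¹' {1}) = ∏ t ∈ T, μ (I t ⁻¹' {1}) :=
    hindep.measure_inter_preimage_eq_mul T (sets := fun _ => {1})
      (fun i _ => measurableSet_singleton 1)
  have h2 : ∀ t : ℕ, I t ⁻¹' {1} = {ω | I t ω = 1} := fun t => by ext ω; simp
  rw [measureReal_def, h1]
  simp only [h2, hbern, Finset.prod_const]
  rw [← ENNReal.ofReal_pow hp0, ENNReal.toReal_ofReal (pow_nonneg hp0 _)]

end probAux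

section arith
variable {p : ℝ}

lemma card3' {a b c : ℕ} (hab : a ≠ b) (hac : a ≠ c) (hbc : b ≠ c) :
    ({a, b, c} : Finset ℕ).card = 3 := by
  rw [Finset.card_insert_of_notMem (by simp [hab, hac]), Finset.card_pair hbc]

lemma card4' {a b c d : ℕ} (hab : a ≠ b) (hac : a ≠ c) (had : a ≠ d)
    (hbc : b ≠ c) (hbd : b ≠ d) (hcd : c ≠ d) :
    ({a, b, c, d} : Finset ℕ).card = 4 := by
  rw [Finset.card_insert_of_notMem (by simp [hab, hac, had]), card3' hbc hbd hcd]

lemma sumA {i : ℕ} (hi : 1 ≤ i) :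
    ∑ j ∈ Icc 1 i, p ^ (({j, i} : Finset ℕ).card) = p + ((i : ℝ) - 1) * p ^ 2 := by
  obtain ⟨m, rfl⟩ : ∃ m, i = m + 1 := ⟨i - 1, by omega⟩
  rw [Finset.sum_Icc_succ_top (by omega : 1 ≤ m + 1)]
  have h1 : ∀ j ∈ Icc 1 m, p ^ (({j, m+1} : Finset ℕ).card) = p ^ 2 := by
    intro j hj
    simp only [Finset.mem_Icc] at hj
    rw [Finset.card_pair (by omega)]
  rw [Finset.sum_congr rfl h1, Finset.sum_const, Nat.card_Icc]
  have : ({m+1, m+1} : Finset ℕ) = {m+1} := by simp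
  rw [this]
  simp only [Finset.card_singleton, pow_one, nsmul_eq_mul]
  push_cast
  ring

lemma inner1 {i i' : ℕ} (hi : 1 ≤ i) (hii' : i < i') :
    ∑ j' ∈ Icc 1 i', p ^ (({i, i, j', i'} : Finset ℕ).card)
      = 2 * p ^ 2 + ((i' : ℝ) - 2) * p ^ 3 := by
  have hsub : ({i, i'} : Finset ℕ) ⊆ Icc 1 i' := by
    intro x hx; simp only [Finset.mem_insert, Finset.mem_singleton] at hx
    rcases hx with rfl | rfl <;> simp [Finset.mem_Icc] <;> omega
  rw [← Finset.sum_sdiff hsub]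
  have h1 : ∀ j' ∈ Icc 1 i' \ {i, i'}, p ^ (({i, i, j', i'} : Finset ℕ).card) = p ^ 3 := by
    intro j' hj'
    simp only [Finset.mem_sdiff, Finset.mem_insert, Finset.mem_singleton, not_or] at hj'
    rw [Finset.insert_idem, card3' (by omega) (by omega) (by omega)]
  rw [Finset.sum_congr rfl h1, Finset.sum_const, Finset.card_sdiff_of_subset hsub,
    Finset.card_pair (by omega), Nat.card_Icc]
  rw [Finset.sum_pair (by omega : i ≠ i')]
  have e1 : ({i, i, i, i'} : Finset ℕ) = {i, i'} := by simp
  have e2 : ({i, i, i', i'} : Finset ℕ) = {i, i'} := by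
    ext x; simp; try tauto
  rw [e1, e2, Finset.card_pair (by omega)]
  have hc : i' + 1 - 1 - 2 = i' - 2 := by omega
  rw [hc, nsmul_eq_mul, Nat.cast_sub (by omega)]
  push_cast
  ring

lemma inner2 {j i i' : ℕ} (hj : 1 ≤ j) (hji : j < i) (hii' : i < i') :
    ∑ j' ∈ Icc 1 i', p ^ (({j, i, j', i'} : Finset ℕ).card)
      = 3 * p ^ 3 + ((i' : ℝ) - 3) * p ^ 4 := by
  have hsub : ({j, i, i'} : Finset ℕ) ⊆ Icc 1 i' := by
    intro x hx; simp only [Finset.mem_insert, Finset.mem_singleton] at hx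
    rcases hx with rfl | rfl | rfl <;> simp [Finset.mem_Icc] <;> omega
  rw [← Finset.sum_sdiff hsub]
  have h1 : ∀ j' ∈ Icc 1 i' \ {j, i, i'}, p ^ (({j, i, j', i'} : Finset ℕ).card) = p ^ 4 := by
    intro j' hj'
    simp only [Finset.mem_sdiff, Finset.mem_insert, Finset.mem_singleton, not_or] at hj'
    rw [card4' (by omega) (by omega) (by omega) (by omega) (by omega) (by omega)]
  rw [Finset.sum_congr rfl h1, Finset.sum_const, Finset.card_sdiff_of_subset hsub,
    card3' (by omega) (by omega) (by omega), Nat.card_Icc]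
  rw [Finset.sum_insert (by simp; omega), Finset.sum_pair (by omega : i ≠ i')]
  have e1 : ({j, i, j, i'} : Finset ℕ) = {j, i, i'} := by ext x; simp; try tauto
  have e2 : ({j, i, i, i'} : Finset ℕ) = {j, i, i'} := by ext x; simp; try tauto
  have e3 : ({j, i, i', i'} : Finset ℕ) = {j, i, i'} := by ext x; simp; try tauto
  rw [e1, e2, e3, card3' (by omega) (by omega) (by omega)]
  have hc : i' + 1 - 1 - 3 = i' - 3 := by omega
  rw [hc, nsmul_eq_mul, Nat.cast_sub (by omega)]
  push_cast
  ring

lemma T_lt {i i' : ℕ} (hi : 1 ≤ i) (hii' : i < i') :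
    ∑ j ∈ Icc 1 i, ∑ j' ∈ Icc 1 i', p ^ (({j, i, j', i'} : Finset ℕ).card)
      = 2 * p ^ 2 + ((i' : ℝ) + 3 * i - 5) * p ^ 3 + ((i : ℝ) - 1) * ((i' : ℝ) - 3) * p ^ 4 := by
  obtain ⟨m, rfl⟩ : ∃ m, i = m + 1 := ⟨i - 1, by omega⟩
  rw [Finset.sum_Icc_succ_top (by omega : 1 ≤ m + 1)]
  have h1 : ∀ j ∈ Icc 1 m, ∑ j' ∈ Icc 1 i', p ^ (({j, m+1, j', i'} : Finset ℕ).card)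
      = 3 * p ^ 3 + ((i' : ℝ) - 3) * p ^ 4 := by
    intro j hj
    simp only [Finset.mem_Icc] at hj
    exact inner2 (by omega) (by omega) hii'
  rw [Finset.sum_congr rfl h1, Finset.sum_const, Nat.card_Icc, inner1 hi hii', nsmul_eq_mul]
  push_cast
  ring

lemma diag_inner_top {i : ℕ} (hi : 1 ≤ i) :
    ∑ j' ∈ Icc 1 i, p ^ (({i, i, j', i} : Finset ℕ).card) = p + ((i : ℝ) - 1) * p ^ 2 := by
  have h1 : ∀ j' ∈ Icc 1 i,
      p ^ (({i, i, j', i} : Finset ℕ).card) = p ^ (({j', i} : Finset ℕ).card) := by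
    intro j' _
    congr 2
    ext x; simp; try tauto
  rw [Finset.sum_congr rfl h1, sumA hi]

lemma diag_inner_lo {j i : ℕ} (hj : 1 ≤ j) (hji : j < i) :
    ∑ j' ∈ Icc 1 i, p ^ (({j, i, j', i} : Finset ℕ).card)
      = 2 * p ^ 2 + ((i : ℝ) - 2) * p ^ 3 := by
  have hsub : ({j, i} : Finset ℕ) ⊆ Icc 1 i := by
    intro x hx; simp only [Finset.mem_insert, Finset.mem_singleton] at hx
    rcases hx with rfl | rfl <;> simp [Finset.mem_Icc] <;> omega
  rw [← Finset.sum_sdiff hsub]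
  have h1 : ∀ j' ∈ Icc 1 i \ {j, i}, p ^ (({j, i, j', i} : Finset ℕ).card) = p ^ 3 := by
    intro j' hj'
    simp only [Finset.mem_sdiff, Finset.mem_insert, Finset.mem_singleton, not_or] at hj'
    have e : ({j, i, j', i} : Finset ℕ) = {j, i, j'} := by ext x; simp; try tauto
    rw [e, card3' (by omega) (by omega) (by omega)]
  rw [Finset.sum_congr rfl h1, Finset.sum_const, Finset.card_sdiff_of_subset hsub,
    Finset.card_pair (by omega), Nat.card_Icc]
  rw [Finset.sum_pair (by omega : j ≠ i)]
  have e1 : ({j, i, j, i} : Finset ℕ) = {j, i} := by ext x; simp; try tauto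
  have e2 : ({j, i, i, i} : Finset ℕ) = {j, i} := by ext x; simp; try tauto
  rw [e1, e2, Finset.card_pair (by omega)]
  have hc : i + 1 - 1 - 2 = i - 2 := by omega
  rw [hc, nsmul_eq_mul, Nat.cast_sub (by omega)]
  push_cast
  ring

lemma T_diag {i : ℕ} (hi : 1 ≤ i) :
    ∑ j ∈ Icc 1 i, ∑ j' ∈ Icc 1 i, p ^ (({j, i, j', i} : Finset ℕ).card)
      = p + 3 * ((i : ℝ) - 1) * p ^ 2 + ((i : ℝ) - 1) * ((i : ℝ) - 2) * p ^ 3 := by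
  obtain ⟨m, rfl⟩ : ∃ m, i = m + 1 := ⟨i - 1, by omega⟩
  rw [Finset.sum_Icc_succ_top (by omega : 1 ≤ m + 1)]
  have h1 : ∀ j ∈ Icc 1 m, ∑ j' ∈ Icc 1 (m+1), p ^ (({j, m+1, j', m+1} : Finset ℕ).card)
      = 2 * p ^ 2 + ((m : ℝ) + 1 - 2) * p ^ 3 := by
    intro j hj
    simp only [Finset.mem_Icc] at hj
    have := diag_inner_lo (p := p) (show 1 ≤ j by omega) (show j < m + 1 by omega)
    rw [this]; push_cast; ring
  rw [Finset.sum_congr rfl h1, Finset.sum_const, Nat.card_Icc, diag_inner_top hi, nsmul_eq_mul]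
  push_cast
  ring

lemma T_symm (i i' : ℕ) :
    ∑ j ∈ Icc 1 i, ∑ j' ∈ Icc 1 i', p ^ (({j, i, j', i'} : Finset ℕ).card)
      = ∑ j ∈ Icc 1 i', ∑ j' ∈ Icc 1 i, p ^ (({j, i', j', i} : Finset ℕ).card) := by
  rw [Finset.sum_comm]
  refine Finset.sum_congr rfl fun j' _ => Finset.sum_congr rfl fun j _ => ?_
  congr 2
  ext x; simp; try tauto

lemma tri_step (f : ℕ → ℕ → ℝ) (k : ℕ) :
    ∑ i ∈ Icc 1 (k+1), ∑ i' ∈ Icc (i+1) (k+1), f i i'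
      = (∑ i ∈ Icc 1 k, ∑ i' ∈ Icc (i+1) k, f i i') + ∑ i ∈ Icc 1 k, f i (k+1) := by
  rw [Finset.sum_Icc_succ_top (by omega : 1 ≤ k + 1)]
  have he : Icc (k+1+1) (k+1) = (∅ : Finset ℕ) := Finset.Icc_eq_empty (by omega)
  rw [he, Finset.sum_empty, add_zero, ← Finset.sum_add_distrib]
  refine Finset.sum_congr rfl fun i hi => ?_
  simp only [Finset.mem_Icc] at hi
  rw [Finset.sum_Icc_succ_top (by omega : i + 1 ≤ k + 1)]

lemma tri_comm (f : ℕ → ℕ → ℝ) (k : ℕ) :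
    ∑ i ∈ Icc 1 k, ∑ i' ∈ Icc 1 (i-1), f i i'
      = ∑ a ∈ Icc 1 k, ∑ b ∈ Icc (a+1) k, f b a := by
  induction k with
  | zero => simp
  | succ n ih =>
    rw [Finset.sum_Icc_succ_top (by omega : 1 ≤ n + 1), ih,
      tri_step (fun a b => f b a) n]
    simp

lemma b3 (k : ℕ) :
    ∑ i ∈ Icc 1 k, ∑ i' ∈ Icc (i+1) k, (1 : ℝ) = (k : ℝ) * ((k : ℝ) - 1) / 2 := by
  induction k with
  | zero => simp
  | succ n ih =>
    rw [tri_step, ih]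
    simp only [Finset.sum_const, Nat.card_Icc, nsmul_eq_mul, mul_one]
    push_cast
    ring

lemma b2 (k : ℕ) :
    ∑ i ∈ Icc 1 k, ∑ i' ∈ Icc (i+1) k, (1 : ℝ) / (i' : ℝ)
      = (k : ℝ) - ∑ i ∈ Icc 1 k, (1 : ℝ) / i := by
  induction k with
  | zero => simp
  | succ n ih =>
    rw [tri_step, ih, Finset.sum_Icc_succ_top (by omega : 1 ≤ n + 1)]
    simp only [Finset.sum_const, Nat.card_Icc, nsmul_eq_mul]
    have hn : ((n : ℝ) + 1) ≠ 0 := by positivity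
    push_cast
    field_simp
    ring

lemma b1 (k : ℕ) :
    ∑ i ∈ Icc 1 k, ∑ i' ∈ Icc (i+1) k, (1 : ℝ) / (i : ℝ)
      = (k : ℝ) * (∑ i ∈ Icc 1 k, (1 : ℝ) / i) - k := by
  induction k with
  | zero => simp
  | succ n ih =>
    rw [tri_step, ih, Finset.sum_Icc_succ_top (by omega : 1 ≤ n + 1)]
    have hn : ((n : ℝ) + 1) ≠ 0 := by positivity
    push_cast
    field_simp
    ring

lemma b0 (k : ℕ) :
    ∑ i ∈ Icc 1 k, ∑ i' ∈ Icc (i+1) k, (1 : ℝ) / (i : ℝ) * ((1 : ℝ) / (i' : ℝ))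
      = ((∑ i ∈ Icc 1 k, (1 : ℝ) / i) ^ 2 - ∑ i ∈ Icc 1 k, (1 : ℝ) / (i : ℝ) ^ 2) / 2 := by
  induction k with
  | zero => simp
  | succ n ih =>
    rw [tri_step, ih, Finset.sum_Icc_succ_top (by omega : 1 ≤ n + 1),
      Finset.sum_Icc_succ_top (by omega : 1 ≤ n + 1)]
    have h1 : ∑ i ∈ Icc 1 n, (1 : ℝ) / (i : ℝ) * ((1 : ℝ) / (((n:ℕ)+1 : ℕ) : ℝ))
        = (∑ i ∈ Icc 1 n, (1 : ℝ) / i) * (1 / ((n : ℝ) + 1)) := by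
      rw [← Finset.sum_mul]
      push_cast
      ring
    push_cast at h1 ⊢
    rw [h1]
    have hn : ((n : ℝ) + 1) ≠ 0 := by positivity
    field_simp
    ring

lemma b0' (k : ℕ) :
    ∑ i ∈ Icc 1 k, (1 : ℝ) / (i : ℝ) * ∑ i' ∈ Icc (i+1) k, (1 : ℝ) / (i' : ℝ)
      = ((∑ i ∈ Icc 1 k, (1 : ℝ) / i) ^ 2 - ∑ i ∈ Icc 1 k, (1 : ℝ) / (i : ℝ) ^ 2) / 2 := by
  rw [← b0 k]
  exact Finset.sum_congr rfl fun i _ => Finset.mul_sum _ _ _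

lemma split3 (g : ℕ → ℝ) {i k : ℕ} (h1 : 1 ≤ i) (h2 : i ≤ k) :
    ∑ x ∈ Icc 1 k, g x
      = (∑ x ∈ Icc 1 (i-1), g x) + g i + ∑ x ∈ Icc (i+1) k, g x := by
  obtain ⟨m, rfl⟩ : ∃ m, i = m + 1 := ⟨i - 1, by omega⟩
  have e1 : Icc 1 k = Ioc 0 k := Finset.Icc_add_one_left_eq_Ioc 0 k
  have e2 : Icc 1 (m+1) = Ioc 0 (m+1) := Finset.Icc_add_one_left_eq_Ioc 0 (m+1)
  have e3 : Icc (m+1+1) k = Ioc (m+1) k := Finset.Icc_add_one_left_eq_Ioc (m+1) k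
  rw [e1, ← Finset.sum_Ioc_consecutive _ (by omega : (0:ℕ) ≤ m+1) (by omega : m+1 ≤ k),
    ← e2, ← e3, Finset.sum_Icc_succ_top (by omega : 1 ≤ m + 1)]
  simp

end arith

theorem variance_APk_bernoulli {Ω : Type*} [MeasurableSpace Ω] (μ : Measure Ω)
    [IsProbabilityMeasure μ] (N : ℕ) (p : ℝ) (hp0 : 0 ≤ p) (hp1 : p ≤ 1)
    (I : ℕ → Ω → ℝ) (hmeas : ∀ j, Measurable (I j))
    (h01 : ∀ j ω, I j ω = 0 ∨ I j ω = 1)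
    (hbern : ∀ j, μ {ω | I j ω = 1} = ENNReal.ofReal p)
    (hindep : iIndepFun I μ)
    (k : ℕ) (hk : 1 ≤ k) (hkN : k ≤ N) :
    variance (fun ω => (1 / (k : ℝ)) * ∑ i ∈ Icc 1 k,
          ((1 / (i : ℝ)) * ∑ j ∈ Icc 1 i, I j ω) * I i ω) μ =
      (5 / k) * p ^ 3 * (1 - p) +
        (1 / (k : ℝ) ^ 2) * p * (1 - p) *
          (p * (1 - 2 * p) * (3 * (∑ i ∈ Icc 1 k, (1 : ℝ) / i) +
              (∑ i ∈ Icc 1 k, (1 : ℝ) / i) ^ 2) +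
            (1 - p) * (1 - 3 * p) * (∑ i ∈ Icc 1 k, (1 : ℝ) / (i : ℝ) ^ 2)) := by
  classical
  have hK : (k : ℝ) ≠ 0 := Nat.cast_ne_zero.2 (by omega)
  -- rewrite the random variable as a double sum of products
  have hXeq : (fun ω => (1 / (k : ℝ)) * ∑ i ∈ Icc 1 k,
          ((1 / (i : ℝ)) * ∑ j ∈ Icc 1 i, I j ω) * I i ω)
      = fun ω => ∑ i ∈ Icc 1 k, ∑ j ∈ Icc 1 i,
          (1 / (k : ℝ)) * (1 / (i : ℝ)) * (I j ω * I i ω) := by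
    funext ω
    rw [Finset.mul_sum]
    refine Finset.sum_congr rfl fun i _ => ?_
    rw [Finset.mul_sum, Finset.sum_mul, Finset.mul_sum]
    exact Finset.sum_congr rfl fun j _ => by ring
  rw [hXeq]
  -- basic integrability facts
  have hmem2 : ∀ a b : ℕ, MemLp (fun ω => I a ω * I b ω) 2 μ := fun a b => by
    rw [mul2_eq_prod h01 a b]; exact memLp_prod hmeas h01 _
  have hint2 : ∀ a b : ℕ, Integrable (fun ω => I a ω * I b ω) μ := fun a b => by
    rw [mul2_eq_prod h01 a b]; exact integrable_prod hmeas h01 _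
  have hint4 : ∀ a b c d : ℕ, Integrable (fun ω => I a ω * I b ω * I c ω * I d ω) μ :=
    fun a b c d => by
    rw [mul4_eq_prod h01 a b c d]; exact integrable_prod hmeas h01 _
  have hval2 : ∀ a b : ℕ, ∫ ω, I a ω * I b ω ∂μ = p ^ (({a, b} : Finset ℕ).card) :=
    fun a b => by
    rw [mul2_eq_prod h01 a b]; exact integral_prod_I hp0 hmeas h01 hbern hindep _
  have hval4 : ∀ a b c d : ℕ,
      ∫ ω, I a ω * I b ω * I c ω * I d ω ∂μ = p ^ (({a, b, c, d} : Finset ℕ).card) :=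
    fun a b c d => by
    rw [mul4_eq_prod h01 a b c d]; exact integral_prod_I hp0 hmeas h01 hbern hindep _
  have hmemX : MemLp (fun ω => ∑ i ∈ Icc 1 k, ∑ j ∈ Icc 1 i,
      (1 / (k : ℝ)) * (1 / (i : ℝ)) * (I j ω * I i ω)) 2 μ := by
    refine memLp_finset_sum _ fun i _ => memLp_finset_sum _ fun j _ => ?_
    exact (hmem2 j i).const_mul _
  rw [variance_eq_sub hmemX]
  -- first moment
  have hEX : (∫ ω, (∑ i ∈ Icc 1 k, ∑ j ∈ Icc 1 i,
        (1 / (k : ℝ)) * (1 / (i : ℝ)) * (I j ω * I i ω)) ∂μ)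
      = ∑ i ∈ Icc 1 k, ∑ j ∈ Icc 1 i,
        (1 / (k : ℝ)) * (1 / (i : ℝ)) * p ^ (({j, i} : Finset ℕ).card) := by
    rw [integral_finset_sum _ fun i _ =>
      integrable_finset_sum _ fun j _ => (hint2 j i).const_mul _]
    refine Finset.sum_congr rfl fun i _ => ?_
    rw [integral_finset_sum _ fun j _ => (hint2 j i).const_mul _]
    refine Finset.sum_congr rfl fun j _ => ?_
    rw [MeasureTheory.integral_const_mul, hval2 j i]
  -- second moment : pointwise expansion of the square
  have hsq : (fun ω => ∑ i ∈ Icc 1 k, ∑ j ∈ Icc 1 i,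
        (1 / (k : ℝ)) * (1 / (i : ℝ)) * (I j ω * I i ω)) ^ 2
      = fun ω => ∑ i ∈ Icc 1 k, ∑ i' ∈ Icc 1 k, ∑ j ∈ Icc 1 i, ∑ j' ∈ Icc 1 i',
        ((1 / (k : ℝ)) * (1 / (i : ℝ)) * ((1 / (k : ℝ)) * (1 / (i' : ℝ))))
          * (I j ω * I i ω * I j' ω * I i' ω) := by
    funext ω
    rw [Pi.pow_apply, sq, Finset.sum_mul_sum]
    refine Finset.sum_congr rfl fun i _ => Finset.sum_congr rfl fun i' _ => ?_
    rw [Finset.sum_mul_sum]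
    refine Finset.sum_congr rfl fun j _ => Finset.sum_congr rfl fun j' _ => by ring
  have hEX2 : (∫ ω, ((fun ω => ∑ i ∈ Icc 1 k, ∑ j ∈ Icc 1 i,
        (1 / (k : ℝ)) * (1 / (i : ℝ)) * (I j ω * I i ω)) ^ 2) ω ∂μ)
      = ∑ i ∈ Icc 1 k, ∑ i' ∈ Icc 1 k, ∑ j ∈ Icc 1 i, ∑ j' ∈ Icc 1 i',
        ((1 / (k : ℝ)) * (1 / (i : ℝ)) * ((1 / (k : ℝ)) * (1 / (i' : ℝ))))
          * p ^ (({j, i, j', i'} : Finset ℕ).card) := by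
    rw [hsq]
    rw [integral_finset_sum _ fun i _ => integrable_finset_sum _ fun i' _ =>
      integrable_finset_sum _ fun j _ => integrable_finset_sum _ fun j' _ =>
        (hint4 j i j' i').const_mul _]
    refine Finset.sum_congr rfl fun i _ => ?_
    rw [integral_finset_sum _ fun i' _ => integrable_finset_sum _ fun j _ =>
      integrable_finset_sum _ fun j' _ => (hint4 j i j' i').const_mul _]
    refine Finset.sum_congr rfl fun i' _ => ?_
    rw [integral_finset_sum _ fun j _ =>
      integrable_finset_sum _ fun j' _ => (hint4 j i j' i').const_mul _]
    refine Finset.sum_congr rfl fun j _ => ?_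
    rw [integral_finset_sum _ fun j' _ => (hint4 j i j' i').const_mul _]
    refine Finset.sum_congr rfl fun j' _ => ?_
    rw [MeasureTheory.integral_const_mul, hval4 j i j' i']
  rw [hEX2, hEX]
  -- now pure arithmetic
  set H : ℝ := ∑ i ∈ Icc 1 k, (1 : ℝ) / i with hH
  set H2 : ℝ := ∑ i ∈ Icc 1 k, (1 : ℝ) / (i : ℝ) ^ 2 with hH2
  -- first moment closed form
  have E1 : ∑ i ∈ Icc 1 k, ∑ j ∈ Icc 1 i,
      (1 / (k : ℝ)) * (1 / (i : ℝ)) * p ^ (({j, i} : Finset ℕ).card)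
      = (1 / (k : ℝ)) * (p * H + p ^ 2 * ((k : ℝ) - H)) := by
    have step : ∀ i ∈ Icc 1 k, ∑ j ∈ Icc 1 i,
        (1 / (k : ℝ)) * (1 / (i : ℝ)) * p ^ (({j, i} : Finset ℕ).card)
        = (1 / (k : ℝ)) * (p * ((1 : ℝ) / i) + (p ^ 2 - p ^ 2 * ((1 : ℝ) / i))) := by
      intro i hi
      simp only [Finset.mem_Icc] at hi
      rw [← Finset.mul_sum, sumA (by omega)]
      have hi0 : (i : ℝ) ≠ 0 := Nat.cast_ne_zero.2 (by omega)
      field_simp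
    rw [Finset.sum_congr rfl step, ← Finset.mul_sum]
    congr 1
    rw [Finset.sum_add_distrib, Finset.sum_sub_distrib, ← Finset.mul_sum, ← Finset.mul_sum,
      Finset.sum_const, Nat.card_Icc, ← hH, nsmul_eq_mul]
    have : (k + 1 - 1 : ℕ) = k := by omega
    rw [this]
    ring
  rw [E1]
  -- second moment: pull the inner double sums together
  have pull : ∀ i i' : ℕ, ∑ j ∈ Icc 1 i, ∑ j' ∈ Icc 1 i',
      ((1 / (k : ℝ)) * (1 / (i : ℝ)) * ((1 / (k : ℝ)) * (1 / (i' : ℝ))))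
        * p ^ (({j, i, j', i'} : Finset ℕ).card)
      = ((1 / (k : ℝ)) * (1 / (i : ℝ)) * ((1 / (k : ℝ)) * (1 / (i' : ℝ))))
        * ∑ j ∈ Icc 1 i, ∑ j' ∈ Icc 1 i', p ^ (({j, i, j', i'} : Finset ℕ).card) := by
    intro i i'
    rw [Finset.mul_sum]
    exact Finset.sum_congr rfl fun j _ => by rw [Finset.mul_sum]
  have E2 : ∑ i ∈ Icc 1 k, ∑ i' ∈ Icc 1 k, ∑ j ∈ Icc 1 i, ∑ j' ∈ Icc 1 i',
      ((1 / (k : ℝ)) * (1 / (i : ℝ)) * ((1 / (k : ℝ)) * (1 / (i' : ℝ))))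
        * p ^ (({j, i, j', i'} : Finset ℕ).card)
      = (1 / (k : ℝ)) * (1 / (k : ℝ)) *
          ((p * H2 + 3 * p ^ 2 * (H - H2) + p ^ 3 * ((k : ℝ) - 3 * H + 2 * H2))
            + 2 * ((2 * p ^ 2 - 5 * p ^ 3 + 3 * p ^ 4) * ((H ^ 2 - H2) / 2)
              + (p ^ 3 - p ^ 4) * ((k : ℝ) * H - k)
              + (3 * p ^ 3 - 3 * p ^ 4) * ((k : ℝ) - H)
              + p ^ 4 * ((k : ℝ) * ((k : ℝ) - 1) / 2))) := by
    -- pull constants out of the inner double sums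
    rw [Finset.sum_congr rfl fun i (_ : i ∈ Icc 1 k) =>
      Finset.sum_congr rfl fun i' (_ : i' ∈ Icc 1 k) => pull i i']
    -- split the inner sum into lower / diagonal / upper parts
    have hsplit : ∀ i ∈ Icc 1 k,
        ∑ i' ∈ Icc 1 k, ((1 / (k : ℝ)) * (1 / (i : ℝ)) * ((1 / (k : ℝ)) * (1 / (i' : ℝ))))
            * ∑ j ∈ Icc 1 i, ∑ j' ∈ Icc 1 i', p ^ (({j, i, j', i'} : Finset ℕ).card)
          = (∑ i' ∈ Icc 1 (i-1),
              ((1 / (k : ℝ)) * (1 / (i : ℝ)) * ((1 / (k : ℝ)) * (1 / (i' : ℝ))))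
                * ∑ j ∈ Icc 1 i, ∑ j' ∈ Icc 1 i', p ^ (({j, i, j', i'} : Finset ℕ).card))
            + ((1 / (k : ℝ)) * (1 / (i : ℝ)) * ((1 / (k : ℝ)) * (1 / (i : ℝ))))
                * (∑ j ∈ Icc 1 i, ∑ j' ∈ Icc 1 i, p ^ (({j, i, j', i} : Finset ℕ).card))
            + ∑ i' ∈ Icc (i+1) k,
              ((1 / (k : ℝ)) * (1 / (i : ℝ)) * ((1 / (k : ℝ)) * (1 / (i' : ℝ))))
                * ∑ j ∈ Icc 1 i, ∑ j' ∈ Icc 1 i', p ^ (({j, i, j', i'} : Finset ℕ).card) := by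
      intro i hi
      simp only [Finset.mem_Icc] at hi
      exact split3 _ (by omega) (by omega)
    rw [Finset.sum_congr rfl hsplit]
    simp only [Finset.sum_add_distrib]
    -- the lower-triangle sum equals the upper-triangle sum
    have hLow : ∑ i ∈ Icc 1 k, ∑ i' ∈ Icc 1 (i-1),
        ((1 / (k : ℝ)) * (1 / (i : ℝ)) * ((1 / (k : ℝ)) * (1 / (i' : ℝ))))
          * ∑ j ∈ Icc 1 i, ∑ j' ∈ Icc 1 i', p ^ (({j, i, j', i'} : Finset ℕ).card)
        = ∑ i ∈ Icc 1 k, ∑ i' ∈ Icc (i+1) k,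
        ((1 / (k : ℝ)) * (1 / (i : ℝ)) * ((1 / (k : ℝ)) * (1 / (i' : ℝ))))
          * ∑ j ∈ Icc 1 i, ∑ j' ∈ Icc 1 i', p ^ (({j, i, j', i'} : Finset ℕ).card) := by
      rw [tri_comm (fun i i' =>
        ((1 / (k : ℝ)) * (1 / (i : ℝ)) * ((1 / (k : ℝ)) * (1 / (i' : ℝ))))
          * ∑ j ∈ Icc 1 i, ∑ j' ∈ Icc 1 i', p ^ (({j, i, j', i'} : Finset ℕ).card)) k]
      refine Finset.sum_congr rfl fun a _ => Finset.sum_congr rfl fun b _ => ?_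
      rw [T_symm b a]
      ring
    rw [hLow]
    -- upper-triangle closed form
    have hUp : ∑ i ∈ Icc 1 k, ∑ i' ∈ Icc (i+1) k,
        ((1 / (k : ℝ)) * (1 / (i : ℝ)) * ((1 / (k : ℝ)) * (1 / (i' : ℝ))))
          * ∑ j ∈ Icc 1 i, ∑ j' ∈ Icc 1 i', p ^ (({j, i, j', i'} : Finset ℕ).card)
        = (1 / (k : ℝ)) * (1 / (k : ℝ)) *
            ((2 * p ^ 2 - 5 * p ^ 3 + 3 * p ^ 4) * ((H ^ 2 - H2) / 2)
              + (p ^ 3 - p ^ 4) * ((k : ℝ) * H - k)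
              + (3 * p ^ 3 - 3 * p ^ 4) * ((k : ℝ) - H)
              + p ^ 4 * ((k : ℝ) * ((k : ℝ) - 1) / 2)) := by
      have step : ∀ i ∈ Icc 1 k, ∀ i' ∈ Icc (i+1) k,
          ((1 / (k : ℝ)) * (1 / (i : ℝ)) * ((1 / (k : ℝ)) * (1 / (i' : ℝ))))
            * ∑ j ∈ Icc 1 i, ∑ j' ∈ Icc 1 i', p ^ (({j, i, j', i'} : Finset ℕ).card)
          = (1 / (k : ℝ)) * (1 / (k : ℝ)) *
              ((2 * p ^ 2 - 5 * p ^ 3 + 3 * p ^ 4) * ((1 : ℝ) / (i : ℝ) * ((1 : ℝ) / (i' : ℝ)))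
                + (p ^ 3 - p ^ 4) * ((1 : ℝ) / (i : ℝ))
                + (3 * p ^ 3 - 3 * p ^ 4) * ((1 : ℝ) / (i' : ℝ))
                + p ^ 4 * 1) := by
        intro i hi i' hi'
        simp only [Finset.mem_Icc] at hi hi'
        rw [T_lt (by omega) (by omega)]
        have h1 : (i : ℝ) ≠ 0 := Nat.cast_ne_zero.2 (by omega)
        have h2 : (i' : ℝ) ≠ 0 := Nat.cast_ne_zero.2 (by omega)
        field_simp
        ring
      rw [Finset.sum_congr rfl fun i hi => Finset.sum_congr rfl fun i' hi' => step i hi i' hi']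
      simp only [← Finset.mul_sum]
      congr 1
      simp only [Finset.sum_add_distrib, ← Finset.mul_sum]
      rw [b0' k, b1 k, b2 k, b3 k, ← hH, ← hH2]
    rw [hUp]
    -- diagonal closed form
    have hDiag : ∑ i ∈ Icc 1 k,
        ((1 / (k : ℝ)) * (1 / (i : ℝ)) * ((1 / (k : ℝ)) * (1 / (i : ℝ))))
          * (∑ j ∈ Icc 1 i, ∑ j' ∈ Icc 1 i, p ^ (({j, i, j', i} : Finset ℕ).card))
        = (1 / (k : ℝ)) * (1 / (k : ℝ)) *
            (p * H2 + 3 * p ^ 2 * H - 3 * p ^ 2 * H2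
              + p ^ 3 * k - 3 * p ^ 3 * H + 2 * p ^ 3 * H2) := by
      have step : ∀ i ∈ Icc 1 k,
          ((1 / (k : ℝ)) * (1 / (i : ℝ)) * ((1 / (k : ℝ)) * (1 / (i : ℝ))))
            * (∑ j ∈ Icc 1 i, ∑ j' ∈ Icc 1 i, p ^ (({j, i, j', i} : Finset ℕ).card))
          = (1 / (k : ℝ)) * (1 / (k : ℝ)) *
              (p * ((1 : ℝ) / (i : ℝ) ^ 2) + 3 * p ^ 2 * ((1 : ℝ) / (i : ℝ))
                - 3 * p ^ 2 * ((1 : ℝ) / (i : ℝ) ^ 2) + p ^ 3 * 1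
                - 3 * p ^ 3 * ((1 : ℝ) / (i : ℝ)) + 2 * p ^ 3 * ((1 : ℝ) / (i : ℝ) ^ 2)) := by
        intro i hi
        simp only [Finset.mem_Icc] at hi
        rw [T_diag (by omega)]
        have h1 : (i : ℝ) ≠ 0 := Nat.cast_ne_zero.2 (by omega)
        field_simp
        ring
      rw [Finset.sum_congr rfl step, ← Finset.mul_sum]
      congr 1
      simp only [Finset.sum_add_distrib, Finset.sum_sub_distrib, ← Finset.mul_sum]
      rw [← hH, ← hH2]
      rw [Finset.sum_const, Nat.card_Icc, nsmul_eq_mul]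
      have : (k + 1 - 1 : ℕ) = k := by omega
      rw [this]
      ring
    rw [hDiag]
    ring

  rw [E2]
  field_simp
  ring
end

section
/- Let a subset S of size m be chosen uniformly at random from {1, …, N}, let I_j indicate j ∈ S, and define AP@k = (1/min(m,k)) ∑_{i=1}^{k} ((1/i) ∑_{j=1}^{i} I_j)·I_i for 1 ≤ k ≤ N. Then E[AP@k] = (m/(N·min(k,m)))·( k·(m−1)/(N−1) + ((N−m)/(N−1))·H_k ), where H_k = ∑_{i=1}^{k} 1/i. -/
open Finset

lemma card_filter_one_mem (s : Finset ℕ) (a : ℕ) (ha : a ∈ s) (n : ℕ) :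
    ((s.powersetCard (n + 1)).filter (fun S => a ∈ S)).card
      = ((s.erase a).powersetCard n).card := by
  apply Finset.card_bij (fun S _ => S.erase a)
  · intro S hS
    simp only [mem_filter, mem_powersetCard] at hS
    obtain ⟨⟨hsub, hcard⟩, haS⟩ := hS
    simp only [mem_powersetCard]
    exact ⟨erase_subset_erase a hsub, by rw [card_erase_of_mem haS, hcard]; rfl⟩
  · intro S hS T hT h
    simp only [mem_filter, mem_powersetCard] at hS hT
    rw [← insert_erase hS.2, ← insert_erase hT.2, h]
  · intro T hT
    simp only [mem_powersetCard] at hT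
    obtain ⟨hsub, hcard⟩ := hT
    have haT : a ∉ T := fun h => (mem_erase.mp (hsub h)).1 rfl
    refine ⟨insert a T, ?_, ?_⟩
    · simp only [mem_filter, mem_powersetCard]
      refine ⟨⟨?_, ?_⟩, mem_insert_self a T⟩
      · exact insert_subset ha (hsub.trans (erase_subset a s))
      · rw [card_insert_of_notMem haT, hcard]
    · rw [erase_insert haT]

lemma card_filter_two_mem (s : Finset ℕ) (a b : ℕ) (ha : a ∈ s) (hb : b ∈ s)
    (hab : a ≠ b) (n : ℕ) :
    ((s.powersetCard (n + 2)).filter (fun S => a ∈ S ∧ b ∈ S)).card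
      = (((s.erase a).erase b).powersetCard n).card := by
  apply Finset.card_bij (fun S _ => (S.erase a).erase b)
  · intro S hS
    simp only [mem_filter, mem_powersetCard] at hS
    obtain ⟨⟨hsub, hcard⟩, haS, hbS⟩ := hS
    simp only [mem_powersetCard]
    constructor
    · exact erase_subset_erase b (erase_subset_erase a hsub)
    · rw [card_erase_of_mem (mem_erase.mpr ⟨hab.symm, hbS⟩), card_erase_of_mem haS, hcard]
      omega
  · intro S hS T hT h
    simp only [mem_filter, mem_powersetCard] at hS hT
    have h1 : S.erase a = T.erase a := by
      rw [← insert_erase (mem_erase.mpr ⟨hab.symm, hS.2.2⟩),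
        ← insert_erase (mem_erase.mpr ⟨hab.symm, hT.2.2⟩), h]
    rw [← insert_erase hS.2.1, ← insert_erase hT.2.1, h1]
  · intro T hT
    simp only [mem_powersetCard] at hT
    obtain ⟨hsub, hcard⟩ := hT
    have haT : a ∉ T := fun h => (mem_erase.mp (mem_of_mem_erase (hsub h))).1 rfl
    have hbT : b ∉ T := fun h => (mem_erase.mp (hsub h)).1 rfl
    refine ⟨insert a (insert b T), ?_, ?_⟩
    · simp only [mem_filter, mem_powersetCard]
      refine ⟨⟨?_, ?_⟩, mem_insert_self a _, mem_insert_of_mem (mem_insert_self b T)⟩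
      · exact insert_subset ha (insert_subset hb
          ((hsub.trans (erase_subset b _)).trans (erase_subset a s)))
      · rw [card_insert_of_notMem (by simp [haT, hab]), card_insert_of_notMem hbT, hcard]
    · rw [show (insert a (insert b T)).erase a = insert b T from by
        rw [erase_insert (by simp [hab, haT])], erase_insert hbT]

set_option maxHeartbeats 1000000 in
theorem expectation_APk_without_replacement
    (N m : ℕ) (hm1 : 1 ≤ m) (hmN : m ≤ N) (hN : 2 ≤ N)
    (k : ℕ) (hk1 : 1 ≤ k) (hkN : k ≤ N) :
    (1 / (N.choose m : ℝ)) * ∑ S ∈ (Icc 1 N).powersetCard m,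
        (1 / (min m k : ℝ)) * ∑ i ∈ Icc 1 k,
          ((1 / (i : ℝ)) * ∑ j ∈ Icc 1 i, (if j ∈ S then (1 : ℝ) else 0)) *
            (if i ∈ S then (1 : ℝ) else 0) =
      ((m : ℝ) / ((N : ℝ) * (min k m : ℝ))) *
        ((k : ℝ) * ((m : ℝ) - 1) / ((N : ℝ) - 1) +
          (((N : ℝ) - m) / ((N : ℝ) - 1)) * ∑ i ∈ Icc 1 k, (1 : ℝ) / i) := by
  have hN0 : (N : ℝ) ≠ 0 := by positivity
  have hN2 : (2 : ℝ) ≤ N := by exact_mod_cast hN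
  have hN1 : (N : ℝ) - 1 ≠ 0 := by linarith
  set C : ℝ := (N.choose m : ℝ) with hCdef
  have hC : C ≠ 0 := by
    have := Nat.choose_pos hmN
    simp only [hCdef]
    positivity
  set A : ℝ := C * m / N with hAdef
  set B : ℝ := C * m * ((m : ℝ) - 1) / ((N : ℝ) * ((N : ℝ) - 1)) with hBdef
  have hcardIcc : (Icc 1 N).card = N := by rw [Nat.card_Icc]; omega
  -- single element count
  have hsingle : ∀ a ∈ Icc 1 N,
      ((((Icc 1 N).powersetCard m).filter (fun S => a ∈ S)).card : ℝ) = A := by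
    intro a ha
    obtain ⟨l, rfl⟩ : ∃ l, m = l + 1 := ⟨m - 1, (Nat.succ_pred_eq_of_pos hm1).symm⟩
    obtain ⟨n, rfl⟩ : ∃ n, N = n + 1 := ⟨N - 1, (Nat.succ_pred_eq_of_pos (by omega)).symm⟩
    rw [card_filter_one_mem _ a ha, card_powersetCard, card_erase_of_mem ha, hcardIcc]
    rw [hAdef, hCdef, eq_div_iff hN0]
    have h0 := Nat.add_one_mul_choose_eq n l
    have h0r : ((n : ℝ) + 1) * (n.choose l : ℝ) = ((n+1).choose (l+1) : ℝ) * ((l : ℝ) + 1) := by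
      exact_mod_cast h0
    push_cast
    linarith [h0r]
  -- pair count
  have hpair : ∀ a ∈ Icc 1 N, ∀ b ∈ Icc 1 N, a ≠ b →
      ((((Icc 1 N).powersetCard m).filter (fun S => a ∈ S ∧ b ∈ S)).card : ℝ) = B := by
    intro a ha b hb hab
    rcases Nat.lt_or_ge m 2 with hm2 | hm2
    · -- m = 1
      have hm : m = 1 := by omega
      have hempty : (((Icc 1 N).powersetCard m).filter (fun S => a ∈ S ∧ b ∈ S)) = ∅ := by
        apply filter_eq_empty_iff.mpr
        intro S hS ⟨haS, hbS⟩
        rw [mem_powersetCard] at hS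
        have : 1 < S.card := Finset.one_lt_card.mpr ⟨a, haS, b, hbS, hab⟩
        omega
      rw [hempty]
      simp [hBdef, hm]
    · obtain ⟨l, rfl⟩ : ∃ l, m = l + 2 := ⟨m - 2, by omega⟩
      obtain ⟨n, rfl⟩ : ∃ n, N = n + 2 := ⟨N - 2, by omega⟩
      rw [card_filter_two_mem _ a b ha hb hab, card_powersetCard,
        card_erase_of_mem (mem_erase.mpr ⟨hab.symm, hb⟩), card_erase_of_mem ha, hcardIcc]
      rw [hBdef, hCdef, eq_div_iff (by positivity : ((n+2:ℕ) : ℝ) * (((n+2:ℕ):ℝ) - 1) ≠ 0)]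
      have h1 := Nat.add_one_mul_choose_eq (n+1) (l+1)
      have h2 := Nat.add_one_mul_choose_eq n l
      have h1r : ((n : ℝ) + 2) * ((n+1).choose (l+1) : ℝ)
          = ((n+2).choose (l+2) : ℝ) * ((l : ℝ) + 2) := by exact_mod_cast h1
      have h2r : ((n : ℝ) + 1) * (n.choose l : ℝ)
          = ((n+1).choose (l+1) : ℝ) * ((l : ℝ) + 1) := by exact_mod_cast h2
      push_cast
      nlinarith [h1r, h2r]
  -- key per-i lemma
  have key : ∀ i ∈ Icc 1 k,
      ∑ S ∈ (Icc 1 N).powersetCard m,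
        (∑ j ∈ Icc 1 i, (if j ∈ S then (1 : ℝ) else 0)) * (if i ∈ S then (1 : ℝ) else 0)
      = ((i : ℝ) - 1) * B + A := by
    intro i hi
    rw [mem_Icc] at hi
    have hiN : i ∈ Icc 1 N := mem_Icc.mpr ⟨hi.1, le_trans hi.2 hkN⟩
    have step1 : ∀ S : Finset ℕ,
        (∑ j ∈ Icc 1 i, (if j ∈ S then (1 : ℝ) else 0)) * (if i ∈ S then (1 : ℝ) else 0)
        = ∑ j ∈ Icc 1 i, (if j ∈ S ∧ i ∈ S then (1 : ℝ) else 0) := by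
      intro S
      rw [sum_mul]
      refine sum_congr rfl fun j _ => ?_
      split_ifs with h1 h2 h3 <;> simp_all
    simp_rw [step1]
    rw [Finset.sum_comm]
    have step2 : ∀ j, ∑ S ∈ (Icc 1 N).powersetCard m,
        (if j ∈ S ∧ i ∈ S then (1 : ℝ) else 0)
        = ((((Icc 1 N).powersetCard m).filter (fun S => j ∈ S ∧ i ∈ S)).card : ℝ) := by
      intro j; simp [Finset.sum_boole]
    simp_rw [step2]
    rw [← Finset.add_sum_erase _ _ (mem_Icc.mpr ⟨hi.1, le_refl i⟩)]
    have hii : ((((Icc 1 N).powersetCard m).filter (fun S => i ∈ S ∧ i ∈ S)).card : ℝ) = A := by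
      have hfe : ((Icc 1 N).powersetCard m).filter (fun S => i ∈ S ∧ i ∈ S)
          = ((Icc 1 N).powersetCard m).filter (fun S => i ∈ S) :=
        filter_congr (fun S _ => by simp)
      rw [hfe]; exact hsingle i hiN
    rw [hii]
    have herase : ∀ j ∈ (Icc 1 i).erase i,
        ((((Icc 1 N).powersetCard m).filter (fun S => j ∈ S ∧ i ∈ S)).card : ℝ) = B := by
      intro j hj
      rw [mem_erase, mem_Icc] at hj
      exact hpair j (mem_Icc.mpr ⟨hj.2.1, le_trans hj.2.2 (le_trans hi.2 hkN)⟩) i hiN hj.1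
    rw [sum_congr rfl herase, sum_const, nsmul_eq_mul,
      card_erase_of_mem (mem_Icc.mpr ⟨hi.1, le_refl i⟩), Nat.card_Icc]
    have hc : ((i + 1 - 1 - 1 : ℕ) : ℝ) = (i : ℝ) - 1 := by
      have h : i + 1 - 1 - 1 = i - 1 := by omega
      rw [h, Nat.cast_sub hi.1]; norm_num
    rw [hc]
    ring
  -- assemble
  rw [← mul_sum, Finset.sum_comm]
  have main : ∑ i ∈ Icc 1 k, ∑ S ∈ (Icc 1 N).powersetCard m,
      ((1 / (i : ℝ)) * ∑ j ∈ Icc 1 i, (if j ∈ S then (1 : ℝ) else 0)) *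
        (if i ∈ S then (1 : ℝ) else 0)
      = ∑ i ∈ Icc 1 k, (B + (A - B) * (1 / (i : ℝ))) := by
    refine sum_congr rfl fun i hi => ?_
    have hi1 : 1 ≤ i := (mem_Icc.mp hi).1
    have hi0 : (i : ℝ) ≠ 0 := by
      have : (0 : ℝ) < i := by exact_mod_cast hi1
      linarith
    have step : ∀ S : Finset ℕ,
        ((1 / (i : ℝ)) * ∑ j ∈ Icc 1 i, (if j ∈ S then (1 : ℝ) else 0)) *
          (if i ∈ S then (1 : ℝ) else 0)
        = (1 / (i : ℝ)) * ((∑ j ∈ Icc 1 i, (if j ∈ S then (1 : ℝ) else 0)) *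
            (if i ∈ S then (1 : ℝ) else 0)) := fun S => by ring
    simp_rw [step]
    rw [← mul_sum, key i hi]
    field_simp
    ring
  rw [main, Finset.sum_add_distrib, sum_const, ← mul_sum, Nat.card_Icc, nsmul_eq_mul]
  have hkc : ((k + 1 - 1 : ℕ) : ℝ) = (k : ℝ) := by norm_num
  rw [hkc]
  have hmincast : min (m : ℝ) (k : ℝ) = min (k : ℝ) (m : ℝ) := min_comm _ _
  have hmin0 : min (k : ℝ) (m : ℝ) ≠ 0 := by
    have hk' : (1 : ℝ) ≤ k := by exact_mod_cast hk1
    have hm' : (1 : ℝ) ≤ m := by exact_mod_cast hm1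
    have : (1 : ℝ) ≤ min (k : ℝ) (m : ℝ) := le_min hk' hm'
    linarith
  rw [hmincast, hAdef, hBdef]
  field_simp
  ring
end

section
/- Let a subset S of size m be chosen uniformly at random from {1,…,N} with N ≥ 3 and m ≥ 1, and let I_j indicate j ∈ S. Then conditionally on I_i = 1, E[(P@i·I_i)² | I_i = 1] = (1/i²)·( 1 + 3(i−1)·(m−1)/(N−1) + (i−1)(i−2)·(m−1)(m−2)/((N−1)(N−2)) ), where P@i = (1/i) ∑_{j=1}^{i} I_j. -/
open Finset

lemma count_supersets {α : Type*} [DecidableEq α] (U A : Finset α) (m : ℕ)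
    (hA : A ⊆ U) (hAm : A.card ≤ m) :
    ((U.powersetCard m).filter (fun S => A ⊆ S)).card
      = (U.card - A.card).choose (m - A.card) := by
  rw [show U.card - A.card = (U \ A).card by rw [Finset.card_sdiff_of_subset hA],
    ← card_powersetCard (m - A.card) (U \ A)]
  apply card_bij' (fun S _ => S \ A) (fun T _ => T ∪ A)
  · intro S hS
    simp only [mem_filter, mem_powersetCard] at hS
    rw [mem_powersetCard]
    exact ⟨sdiff_subset_sdiff hS.1.1 le_rfl ,
      by rw [card_sdiff_of_subset hS.2, hS.1.2]⟩
  · intro T hT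
    rw [mem_powersetCard] at hT
    simp only [mem_filter, mem_powersetCard]
    have hd : Disjoint T A := disjoint_of_subset_left hT.1 sdiff_disjoint
    refine ⟨⟨union_subset (hT.1.trans sdiff_subset) hA, ?_⟩, subset_union_right⟩
    rw [card_union_of_disjoint hd, hT.2]
    omega
  · intro S hS
    simp only [mem_filter] at hS
    exact sdiff_union_of_subset hS.2
  · intro T hT
    rw [mem_powersetCard] at hT
    have hd : Disjoint T A := disjoint_of_subset_left hT.1 sdiff_disjoint
    rw [union_sdiff_right, sdiff_eq_self_of_disjoint hd]

lemma count_supersets_big {α : Type*} [DecidableEq α] (U A : Finset α) (m : ℕ)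
    (hAm : m < A.card) :
    ((U.powersetCard m).filter (fun S => A ⊆ S)).card = 0 := by
  rw [card_eq_zero, filter_eq_empty_iff]
  intro S hS hsub
  rw [mem_powersetCard] at hS
  have := card_le_card hsub
  omega

-- key numeric identity
lemma choose_step (a b : ℕ) (h2 : 2 ≤ a) (hb : 2 ≤ b) :
    (a - 1) * (a - 2).choose (b - 2) = (b - 1) * ((a - 1).choose (b - 1)) := by
  have := Nat.add_one_mul_choose_eq (a - 2) (b - 2)
  have h1 : a - 2 + 1 = a - 1 := by omega
  have h2' : b - 2 + 1 = b - 1 := by omega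
  rw [h1, h2'] at this
  rw [this]; ring

theorem conditional_second_moment_without_replacement
    (N m : ℕ) (hm1 : 1 ≤ m) (hmN : m ≤ N) (hN : 3 ≤ N)
    (i : ℕ) (hi1 : 1 ≤ i) (hiN : i ≤ N) :
    (1 / ((N - 1).choose (m - 1) : ℝ)) *
        ∑ S ∈ (((Icc 1 N).powersetCard m).filter (fun S => i ∈ S)),
          (((1 / (i : ℝ)) * ∑ j ∈ Icc 1 i, (if j ∈ S then (1 : ℝ) else 0)) *
            (if i ∈ S then (1 : ℝ) else 0)) ^ 2 =
      (1 / (i : ℝ) ^ 2) *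
        (1 + 3 * ((i : ℝ) - 1) * ((m : ℝ) - 1) / ((N : ℝ) - 1) +
          ((i : ℝ) - 1) * ((i : ℝ) - 2) * (((m : ℝ) - 1) * ((m : ℝ) - 2)) /
            ((((N : ℝ) - 1)) * ((N : ℝ) - 2))) := by
  have hiIcc : i ∈ Icc 1 N := by simp [mem_Icc]; omega
  set F := ((Icc 1 N).powersetCard m).filter (fun S => i ∈ S) with hF
  set C1 : ℕ := (N - 1).choose (m - 1) with hC1def
  set r2 : ℝ := ((m : ℝ) - 1) / ((N : ℝ) - 1) with hr2
  set r3 : ℝ := (((m : ℝ) - 1) * ((m : ℝ) - 2)) / (((N : ℝ) - 1) * ((N : ℝ) - 2)) with hr3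
  have hN1 : ((N : ℝ) - 1) ≠ 0 := by
    have : (3 : ℝ) ≤ (N : ℝ) := by exact_mod_cast hN
    linarith
  have hN2 : ((N : ℝ) - 2) ≠ 0 := by
    have : (3 : ℝ) ≤ (N : ℝ) := by exact_mod_cast hN
    linarith
  -- card F = C1
  have hcardIcc : (Icc 1 N).card = N := by simp
  have hFcard : F.card = C1 := by
    rw [hF, filter_congr (fun S _ => by simp [singleton_subset_iff] :
        ∀ S ∈ (Icc 1 N).powersetCard m, (i ∈ S) ↔ ({i} ⊆ S)),
      count_supersets _ _ _ (by simpa using hiIcc) (by simpa using hm1), hcardIcc]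
    simp [hC1def]
  have hC1pos : 0 < C1 := by
    rw [hC1def]
    exact Nat.choose_pos (by omega)
  have hC1ne : (C1 : ℝ) ≠ 0 := by positivity
  -- count with one extra element
  have key2 : ∀ j, j ∈ Icc 1 N → j ≠ i →
      ((F.filter (fun S => j ∈ S)).card : ℝ) = r2 * C1 := by
    intro j hj hji
    rw [hF, filter_filter]
    rw [filter_congr (fun S _ => by simp [insert_subset_iff] :
        ∀ S ∈ (Icc 1 N).powersetCard m, (i ∈ S ∧ j ∈ S) ↔ (({i, j} : Finset ℕ) ⊆ S))]
    have hsub : ({i, j} : Finset ℕ) ⊆ Icc 1 N := by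
      intro x hx; simp at hx; rcases hx with h | h <;> simp [h, hiIcc, hj]
    have hcard2 : ({i, j} : Finset ℕ).card = 2 := by
      rw [card_insert_of_notMem (by simp [Ne.symm hji]), card_singleton]
    rcases Nat.lt_or_ge m 2 with hm2 | hm2
    · have hm : m = 1 := by omega
      rw [count_supersets_big _ _ _ (by omega)]
      simp [hr2, hm]
    · rw [count_supersets _ _ _ hsub (by omega), hcardIcc, hcard2]
      have := choose_step N m (by omega) hm2
      have hcast : ((N : ℝ) - 1) * ((N - 2).choose (m - 2) : ℝ)
          = ((m : ℝ) - 1) * (C1 : ℝ) := by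
        have h1 : ((N - 1 : ℕ) : ℝ) = (N : ℝ) - 1 := by
          push_cast [Nat.cast_sub (by omega : 1 ≤ N)]; ring
        have h2 : ((m - 1 : ℕ) : ℝ) = (m : ℝ) - 1 := by
          push_cast [Nat.cast_sub hm1]; ring
        have := congrArg (fun n : ℕ => (n : ℝ)) this
        push_cast at this
        rw [h1, h2] at this
        exact this
      rw [hr2]
      field_simp
      linarith [hcast]
  -- count with two extra distinct elements
  have key3 : ∀ j k, j ∈ Icc 1 N → k ∈ Icc 1 N → j ≠ i → k ≠ i → j ≠ k →
      ((F.filter (fun S => j ∈ S ∧ k ∈ S)).card : ℝ) = r3 * C1 := by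
    intro j k hj hk hji hki hjk
    rw [hF, filter_filter]
    rw [filter_congr (fun S _ => by simp [insert_subset_iff]; try tauto :
        ∀ S ∈ (Icc 1 N).powersetCard m,
          (i ∈ S ∧ j ∈ S ∧ k ∈ S) ↔ (({i, j, k} : Finset ℕ) ⊆ S))]
    have hsub : ({i, j, k} : Finset ℕ) ⊆ Icc 1 N := by
      intro x hx; simp at hx; rcases hx with h | h | h <;> simp [h, hiIcc, hj, hk]
    have hcard3 : ({i, j, k} : Finset ℕ).card = 3 := by
      rw [card_insert_of_notMem (by simp [Ne.symm hji, Ne.symm hki]),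
        card_insert_of_notMem (by simp [hjk]), card_singleton]
    rcases Nat.lt_or_ge m 3 with hm3 | hm3
    · rw [count_supersets_big _ _ _ (by omega)]
      have : m = 1 ∨ m = 2 := by omega
      rcases this with h | h <;> simp [hr3, h]
    · rw [count_supersets _ _ _ hsub (by omega), hcardIcc, hcard3]
      have e1 := choose_step N m (by omega) (by omega)
      have e2 := choose_step (N - 1) (m - 1) (by omega) (by omega)
      have hs1 : N - 1 - 1 = N - 2 := by omega
      have hs2 : N - 1 - 2 = N - 3 := by omega
      have hs3 : m - 1 - 1 = m - 2 := by omega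
      have hs4 : m - 1 - 2 = m - 3 := by omega
      rw [hs1, hs2, hs3, hs4] at e2
      -- (N-2) * C(N-3, m-3) = (m-2) * C(N-2, m-2)
      have c1 : ((N : ℝ) - 2) * ((N - 3).choose (m - 3) : ℝ)
          = ((m : ℝ) - 2) * ((N - 2).choose (m - 2) : ℝ) := by
        have := congrArg (fun n : ℕ => (n : ℝ)) e2
        push_cast at this
        rw [Nat.cast_sub (by omega : 2 ≤ N), Nat.cast_sub (by omega : 2 ≤ m)] at this
        push_cast at this
        convert this using 2 <;> ring
      have c2 : ((N : ℝ) - 1) * ((N - 2).choose (m - 2) : ℝ)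
          = ((m : ℝ) - 1) * (C1 : ℝ) := by
        have := congrArg (fun n : ℕ => (n : ℝ)) e1
        push_cast at this
        rw [Nat.cast_sub (by omega : 1 ≤ N), Nat.cast_sub hm1] at this
        push_cast at this
        convert this using 2 <;> ring
      rw [hr3]
      field_simp
      nlinarith [c1, c2]
  -- setup for sum manipulation
  have hIcc : Icc 1 i = insert i (Icc 1 (i-1)) := by
    ext j; simp only [mem_Icc, mem_insert]; omega
  have hinot : i ∉ Icc 1 (i-1) := by simp only [mem_Icc]; omega
  set D := Icc 1 (i-1) with hD
  have hDcard : D.card = i - 1 := by simp [hD, Nat.card_Icc]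
  have hDcast : ((D.card : ℝ)) = (i : ℝ) - 1 := by
    rw [hDcard, Nat.cast_sub hi1]; norm_num
  have hDmem : ∀ j ∈ D, j ∈ Icc 1 N ∧ j ≠ i := by
    intro j hj; rw [hD, mem_Icc] at hj
    constructor
    · rw [mem_Icc]; omega
    · omega
  set T : Finset ℕ → ℝ := fun S => ∑ j ∈ D, (if j ∈ S then (1:ℝ) else 0) with hT
  have hsummand : ∀ S ∈ F,
      (((1 / (i : ℝ)) * ∑ j ∈ Icc 1 i, (if j ∈ S then (1 : ℝ) else 0)) *
        (if i ∈ S then (1 : ℝ) else 0)) ^ 2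
      = (1/(i:ℝ))^2 * (1 + 2 * T S + T S ^ 2) := by
    intro S hS
    have hiS : i ∈ S := (mem_filter.1 hS).2
    rw [hIcc, sum_insert hinot, if_pos hiS]
    simp only [hT]
    ring
  rw [sum_congr rfl hsummand, ← mul_sum]
  have hsum1 : ∑ S ∈ F, (1:ℝ) = C1 := by
    rw [sum_const, hFcard]; simp
  have hsumT : ∑ S ∈ F, T S = ((i:ℝ) - 1) * (r2 * C1) := by
    rw [hT]
    rw [sum_comm]
    have : ∀ j ∈ D, (∑ S ∈ F, (if j ∈ S then (1:ℝ) else 0)) = r2 * C1 := by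
      intro j hj
      rw [sum_boole]
      exact key2 j (hDmem j hj).1 (hDmem j hj).2
    rw [sum_congr rfl this, sum_const, nsmul_eq_mul, hDcast]
  have hsumT2 : ∑ S ∈ F, (T S)^2
      = ((i:ℝ) - 1) * (r2 * C1) + ((i:ℝ) - 1) * ((i:ℝ) - 2) * (r3 * C1) := by
    have hTsq : ∀ S, (T S)^2
        = ∑ j ∈ D, ∑ k ∈ D, (if j ∈ S ∧ k ∈ S then (1:ℝ) else 0) := by
      intro S
      rw [hT, sq, sum_mul_sum]
      refine sum_congr rfl fun j _ => sum_congr rfl fun k _ => ?_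
      by_cases h1 : j ∈ S <;> by_cases h2 : k ∈ S <;> simp [h1, h2]
    simp_rw [hTsq]
    rw [sum_comm]
    have step1 : ∀ j ∈ D,
        (∑ S ∈ F, ∑ k ∈ D, (if j ∈ S ∧ k ∈ S then (1:ℝ) else 0))
        = ((i:ℝ) - 1) * (r3 * C1) + (r2 * C1 - r3 * C1) := by
      intro j hj
      rw [sum_comm]
      have inner : ∀ k ∈ D,
          (∑ S ∈ F, (if j ∈ S ∧ k ∈ S then (1:ℝ) else 0))
          = r3 * C1 + (if j = k then r2 * C1 - r3 * C1 else 0) := by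
        intro k hk
        rw [sum_boole]
        by_cases hjk : j = k
        · subst hjk
          rw [filter_congr (fun S _ => by tauto :
              ∀ S ∈ F, (j ∈ S ∧ j ∈ S) ↔ (j ∈ S))]
          rw [key2 j (hDmem j hj).1 (hDmem j hj).2]
          simp
        · rw [key3 j k (hDmem j hj).1 (hDmem k hk).1 (hDmem j hj).2
            (hDmem k hk).2 hjk]
          simp [hjk]
      rw [sum_congr rfl inner, sum_add_distrib, sum_const, sum_ite_eq D j
        (fun _ => r2 * C1 - r3 * C1), if_pos hj, nsmul_eq_mul, hDcast]
    rw [sum_congr rfl step1, sum_const, nsmul_eq_mul, hDcast]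
    ring
  rw [sum_add_distrib, sum_add_distrib, hsum1, ← mul_sum, hsumT, hsumT2, hr2, hr3]
  field_simp
  ring
end

section
/- Let a subset S of size m be chosen uniformly at random from {1,…,N} with N ≥ 3, and let I_j indicate j ∈ S. Then for each i ≤ N, Var(P@i·I_i) = (m/(N·i²))·( 1 + 3(i−1)·(m−1)/(N−1) + (i−1)(i−2)·(m−1)(m−2)/((N−1)(N−2)) ) − (m²/(N²·i²))·( (i−1)·(m−1)/(N−1) + 1 )², where P@i = (1/i) ∑_{j=1}^{i} I_j. -/
open Finset

/-- Number of `m`-subsets of `u` containing a fixed subset `A`. -/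
lemma cnt_supersets (u A : Finset ℕ) (hA : A ⊆ u) (m : ℕ) (hm : A.card ≤ m) :
    ((u.powersetCard m).filter (fun S => A ⊆ S)).card
      = (u.card - A.card).choose (m - A.card) := by
  rw [← card_sdiff_of_subset hA, ← card_powersetCard (m - A.card) (u \ A)]
  apply Finset.card_bij' (fun S _ => S \ A) (fun T _ => T ∪ A)
  · intro S hS
    simp only [mem_filter, mem_powersetCard] at hS
    obtain ⟨⟨hSu, hScard⟩, hAS⟩ := hS
    rw [mem_powersetCard]
    exact ⟨sdiff_subset_sdiff hSu Subset.rfl, by rw [card_sdiff_of_subset hAS, hScard]⟩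
  · intro T hT
    rw [mem_powersetCard] at hT
    obtain ⟨hTu, hTcard⟩ := hT
    have hdisj : Disjoint T A := sdiff_disjoint.mono_left hTu
    simp only [mem_filter, mem_powersetCard]
    refine ⟨⟨union_subset (hTu.trans sdiff_subset) hA, ?_⟩, subset_union_right⟩
    rw [card_union_of_disjoint hdisj, hTcard]
    omega
  · intro S hS
    simp only [mem_filter, mem_powersetCard] at hS
    exact sdiff_union_of_subset hS.2
  · intro T hT
    rw [mem_powersetCard] at hT
    have hdisj : Disjoint T A := sdiff_disjoint.mono_left hT.1
    rw [union_sdiff_cancel_right hdisj]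

lemma cnt_sum (u A : Finset ℕ) (hA : A ⊆ u) (m : ℕ) :
    ∑ S ∈ u.powersetCard m, (if A ⊆ S then (1:ℝ) else 0)
      = if A.card ≤ m then ((u.card - A.card).choose (m - A.card) : ℝ) else 0 := by
  rw [sum_boole]
  split_ifs with h
  · rw [cnt_supersets u A hA m h]
  · push_neg at h
    have : (u.powersetCard m).filter (fun S => A ⊆ S) = ∅ := by
      rw [filter_eq_empty_iff]
      intro S hS hAS
      rw [mem_powersetCard] at hS
      have := card_le_card hAS
      omega
    rw [this]
    simp

lemma step_id {n k : ℕ} (hk : 1 ≤ k) (hkn : k ≤ n) :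
    (n - 1).choose (k - 1) * n = n.choose k * k := by
  have h := Nat.add_one_mul_choose_eq (n - 1) (k - 1)
  have h1 : n - 1 + 1 = n := by omega
  have h2 : k - 1 + 1 = k := by omega
  rw [h1, h2] at h
  rw [mul_comm]
  exact h

theorem variance_precision_times_indicator_without_replacement
    (N m : ℕ) (hmN : m ≤ N) (hN : 3 ≤ N)
    (i : ℕ) (hi1 : 1 ≤ i) (hiN : i ≤ N) :
    (1 / (N.choose m : ℝ)) * (∑ S ∈ (Icc 1 N).powersetCard m,
        (((1 / (i : ℝ)) * ∑ j ∈ Icc 1 i, (if j ∈ S then (1 : ℝ) else 0)) *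
          (if i ∈ S then (1 : ℝ) else 0)) ^ 2) -
      ((1 / (N.choose m : ℝ)) * ∑ S ∈ (Icc 1 N).powersetCard m,
        ((1 / (i : ℝ)) * ∑ j ∈ Icc 1 i, (if j ∈ S then (1 : ℝ) else 0)) *
          (if i ∈ S then (1 : ℝ) else 0)) ^ 2 =
      ((m : ℝ) / ((N : ℝ) * (i : ℝ) ^ 2)) *
        (1 + 3 * ((i : ℝ) - 1) * ((m : ℝ) - 1) / ((N : ℝ) - 1) +
          ((i : ℝ) - 1) * ((i : ℝ) - 2) * (((m : ℝ) - 1) * ((m : ℝ) - 2)) /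
            (((N : ℝ) - 1) * ((N : ℝ) - 2))) -
      ((m : ℝ) ^ 2 / ((N : ℝ) ^ 2 * (i : ℝ) ^ 2)) *
        (((i : ℝ) - 1) * ((m : ℝ) - 1) / ((N : ℝ) - 1) + 1) ^ 2 := by
  set c : ℕ → ℝ := fun t => if t ≤ m then ((N - t).choose (m - t) : ℝ) else 0 with hc
  set C : ℝ := (N.choose m : ℝ) with hCdef
  have hsub : Icc 1 i ⊆ Icc 1 N := Icc_subset_Icc le_rfl hiN
  have hiu : i ∈ Icc 1 N := mem_Icc.2 ⟨hi1, hiN⟩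
  have hcnt : ∀ A : Finset ℕ, A ⊆ Icc 1 N →
      ∑ S ∈ (Icc 1 N).powersetCard m, (if A ⊆ S then (1:ℝ) else 0) = c A.card := by
    intro A hA
    rw [cnt_sum _ _ hA m]
    simp [hc, Nat.card_Icc]
  have hmerge2 : ∀ (j : ℕ) (S : Finset ℕ),
      (if j ∈ S then (1:ℝ) else 0) * (if i ∈ S then (1:ℝ) else 0)
        = if ({j, i} : Finset ℕ) ⊆ S then (1:ℝ) else 0 := by
    intro j S
    by_cases hj : j ∈ S <;> by_cases hi' : i ∈ S <;>
      simp [insert_subset_iff, hj, hi']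
  have hmerge3 : ∀ (j k : ℕ) (S : Finset ℕ),
      (if j ∈ S then (1:ℝ) else 0) * (if k ∈ S then (1:ℝ) else 0) *
        (if i ∈ S then (1:ℝ) else 0)
        = if ({j, k, i} : Finset ℕ) ⊆ S then (1:ℝ) else 0 := by
    intro j k S
    by_cases hj : j ∈ S <;> by_cases hk : k ∈ S <;> by_cases hi' : i ∈ S <;>
      simp [insert_subset_iff, hj, hk, hi']
  have hT : i ∉ Ico 1 i := by simp
  have hTcard : (Ico 1 i).card = i - 1 := by rw [Nat.card_Ico]
  have hsplit : Icc 1 i = insert i (Ico 1 i) := (Ico_insert_right hi1).symm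
  -- cast facts
  have hci1 : ((i - 1 : ℕ) : ℝ) = (i:ℝ) - 1 := by
    rw [Nat.cast_sub hi1]; norm_num
  have hci2 : ((i - 1 : ℕ) : ℝ) * ((i - 1 - 1 : ℕ) : ℝ) = ((i:ℝ) - 1) * ((i:ℝ) - 2) := by
    rcases Nat.lt_or_ge i 2 with h | h
    · interval_cases i
      norm_num
    · have h2 : i - 1 - 1 = i - 2 := by omega
      rw [hci1, h2, Nat.cast_sub h]
      norm_num
  -- the mean
  have hmean : ∑ S ∈ (Icc 1 N).powersetCard m,
      ((1 / (i : ℝ)) * ∑ j ∈ Icc 1 i, (if j ∈ S then (1 : ℝ) else 0)) *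
        (if i ∈ S then (1 : ℝ) else 0)
      = (1/(i:ℝ)) * (c 1 + ((i:ℝ) - 1) * c 2) := by
    have e1 : ∀ S : Finset ℕ,
        ((1 / (i : ℝ)) * ∑ j ∈ Icc 1 i, (if j ∈ S then (1 : ℝ) else 0)) *
          (if i ∈ S then (1 : ℝ) else 0)
        = (1/(i:ℝ)) * ∑ j ∈ Icc 1 i, (if ({j,i} : Finset ℕ) ⊆ S then (1:ℝ) else 0) := by
      intro S
      rw [mul_assoc, sum_mul]
      congr 1
      exact sum_congr rfl fun j _ => hmerge2 j S
    rw [sum_congr rfl fun S _ => e1 S, ← mul_sum, sum_comm]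
    have e2 : ∀ j ∈ Icc 1 i,
        ∑ S ∈ (Icc 1 N).powersetCard m, (if ({j,i} : Finset ℕ) ⊆ S then (1:ℝ) else 0)
          = c (({j,i} : Finset ℕ).card) :=
      fun j hj => hcnt _ (insert_subset (hsub hj) (singleton_subset_iff.2 hiu))
    rw [sum_congr rfl e2, hsplit, sum_insert hT]
    have hii : (({i,i} : Finset ℕ).card) = 1 := by simp
    have e3 : ∀ j ∈ Ico 1 i, c (({j,i} : Finset ℕ).card) = c 2 := by
      intro j hj
      have hji : j ≠ i := by
        rw [mem_Ico] at hj; omega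
      rw [card_insert_of_notMem (by simp [hji]), card_singleton]
    rw [hii, sum_congr rfl e3, sum_const, hTcard, nsmul_eq_mul, hci1]
  -- the second moment
  have hsq : ∑ S ∈ (Icc 1 N).powersetCard m,
      (((1 / (i : ℝ)) * ∑ j ∈ Icc 1 i, (if j ∈ S then (1 : ℝ) else 0)) *
        (if i ∈ S then (1 : ℝ) else 0)) ^ 2
      = (1/(i:ℝ))^2 * (c 1 + 3*((i:ℝ)-1)*c 2 + ((i:ℝ)-1)*((i:ℝ)-2)*c 3) := by
    have e1 : ∀ S : Finset ℕ,
        (((1 / (i : ℝ)) * ∑ j ∈ Icc 1 i, (if j ∈ S then (1 : ℝ) else 0)) *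
          (if i ∈ S then (1 : ℝ) else 0)) ^ 2
        = (1/(i:ℝ))^2 * ∑ j ∈ Icc 1 i, ∑ k ∈ Icc 1 i,
            (if ({j,k,i} : Finset ℕ) ⊆ S then (1:ℝ) else 0) := by
      intro S
      have step1 : (((1 / (i : ℝ)) * ∑ j ∈ Icc 1 i, (if j ∈ S then (1 : ℝ) else 0)) *
            (if i ∈ S then (1 : ℝ) else 0)) ^ 2
          = (1/(i:ℝ))^2 * (((∑ j ∈ Icc 1 i, (if j ∈ S then (1 : ℝ) else 0)) *
              (∑ k ∈ Icc 1 i, (if k ∈ S then (1 : ℝ) else 0))) *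
              (if i ∈ S then (1 : ℝ) else 0)) := by
        by_cases hi' : i ∈ S <;> simp [hi'] <;> ring
      rw [step1, sum_mul_sum, sum_mul]
      congr 1
      refine sum_congr rfl fun j _ => ?_
      rw [sum_mul]
      exact sum_congr rfl fun k _ => hmerge3 j k S
    rw [sum_congr rfl fun S _ => e1 S, ← mul_sum]
    congr 1
    rw [sum_comm]
    have e2 : ∀ j ∈ Icc 1 i,
        ∑ S ∈ (Icc 1 N).powersetCard m, ∑ k ∈ Icc 1 i,
            (if ({j,k,i} : Finset ℕ) ⊆ S then (1:ℝ) else 0)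
          = ∑ k ∈ Icc 1 i, c (({j,k,i} : Finset ℕ).card) := by
      intro j hj
      rw [sum_comm]
      refine sum_congr rfl fun k hk => hcnt _ ?_
      exact insert_subset (hsub hj) (insert_subset (hsub hk) (singleton_subset_iff.2 hiu))
    rw [sum_congr rfl e2]
    -- evaluate the double sum
    rw [hsplit, sum_insert hT]
    -- term j = i
    have hji : ∀ j ∈ Ico 1 i, j ≠ i := by
      intro j hj; rw [mem_Ico] at hj; omega
    have t1 : ∑ k ∈ insert i (Ico 1 i), c (({i,k,i} : Finset ℕ).card)
        = c 1 + ((i:ℝ) - 1) * c 2 := by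
      rw [sum_insert hT]
      have hiii : (({i,i,i} : Finset ℕ).card) = 1 := by simp
      have e3 : ∀ k ∈ Ico 1 i, c (({i,k,i} : Finset ℕ).card) = c 2 := by
        intro k hk
        have hki : k ≠ i := hji k hk
        have hset : ({i,k,i} : Finset ℕ) = {k,i} := by
          ext x; simp; try tauto
        rw [hset, card_pair hki]
      rw [hiii, sum_congr rfl e3, sum_const, hTcard, nsmul_eq_mul, hci1]
    have t2 : ∀ j ∈ Ico 1 i, ∑ k ∈ insert i (Ico 1 i), c (({j,k,i} : Finset ℕ).card)
        = 2 * c 2 + ((i - 1 - 1 : ℕ) : ℝ) * c 3 := by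
      intro j hj
      have hjne : j ≠ i := hji j hj
      rw [sum_insert hT]
      have hjii : (({j,i,i} : Finset ℕ).card) = 2 := by
        have hset : ({j,i,i} : Finset ℕ) = {j,i} := by
          ext x; simp; try tauto
        rw [hset, card_pair hjne]
      have hinner : ∑ k ∈ Ico 1 i, c (({j,k,i} : Finset ℕ).card)
          = c 2 + ((i - 1 - 1 : ℕ) : ℝ) * c 3 := by
        rw [← insert_erase hj, sum_insert (notMem_erase j _)]
        have hjji : (({j,j,i} : Finset ℕ).card) = 2 := by
          have hset : ({j,j,i} : Finset ℕ) = {j,i} := by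
            ext x; simp; try tauto
          rw [hset, card_pair hjne]
        have e4 : ∀ k ∈ (Ico 1 i).erase j, c (({j,k,i} : Finset ℕ).card) = c 3 := by
          intro k hk
          have hkj : k ≠ j := (mem_erase.1 hk).1
          have hki : k ≠ i := hji k (mem_erase.1 hk).2
          have hcard : (({j,k,i} : Finset ℕ).card) = 3 := by
            rw [card_insert_of_notMem (by simp [hjne, hkj.symm]), card_pair hki]
          rw [hcard]
        rw [hjji, sum_congr rfl e4, sum_const, card_erase_of_mem hj, hTcard,
          nsmul_eq_mul]
      rw [hjii, hinner]
      ring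
    rw [t1, sum_congr rfl t2, sum_const, hTcard, nsmul_eq_mul, hci1]
    have : ((i:ℝ) - 1) * (2 * c 2 + ((i - 1 - 1 : ℕ) : ℝ) * c 3)
        = 2 * ((i:ℝ) - 1) * c 2 + (((i - 1 : ℕ) : ℝ) * ((i - 1 - 1 : ℕ) : ℝ)) * c 3 := by
      rw [hci1]; ring
    rw [this, hci2]
    ring
  -- values of c
  have hNR : (3:ℝ) ≤ (N:ℝ) := by exact_mod_cast hN
  have hN0 : (N:ℝ) ≠ 0 := by linarith
  have hN1 : (N:ℝ) - 1 ≠ 0 := by linarith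
  have hN2 : (N:ℝ) - 2 ≠ 0 := by linarith
  have hi0 : (i:ℝ) ≠ 0 := by
    have : (1:ℝ) ≤ (i:ℝ) := by exact_mod_cast hi1
    linarith
  have hC0 : C ≠ 0 := by
    have := Nat.choose_pos hmN
    simp only [hCdef]
    exact_mod_cast this.ne'
  have hc1v : c 1 * (N:ℝ) = C * m := by
    by_cases hm1 : 1 ≤ m
    · simp only [hc, if_pos hm1, hCdef]
      exact_mod_cast step_id hm1 hmN
    · have hm0 : m = 0 := by omega
      subst hm0
      simp [hc]
  have hc2v : c 2 * ((N:ℝ) - 1) = c 1 * ((m:ℝ) - 1) := by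
    by_cases hm2 : 2 ≤ m
    · simp only [hc, if_pos hm2, if_pos (by omega : 1 ≤ m)]
      have h := step_id (n := N - 1) (k := m - 1) (by omega) (by omega)
      have hN' : N - 1 - 1 = N - 2 := by omega
      have hm' : m - 1 - 1 = m - 2 := by omega
      rw [hN', hm'] at h
      have hcast := congrArg (Nat.cast : ℕ → ℝ) h
      push_cast [Nat.cast_sub (by omega : 1 ≤ N), Nat.cast_sub (by omega : 1 ≤ m)] at hcast
      linarith [hcast]
    · interval_cases m <;> simp [hc]
  have hc3v : c 3 * ((N:ℝ) - 2) = c 2 * ((m:ℝ) - 2) := by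
    by_cases hm3 : 3 ≤ m
    · simp only [hc, if_pos hm3, if_pos (by omega : 2 ≤ m)]
      have h := step_id (n := N - 2) (k := m - 2) (by omega) (by omega)
      have hN' : N - 2 - 1 = N - 3 := by omega
      have hm' : m - 2 - 1 = m - 3 := by omega
      rw [hN', hm'] at h
      have hcast := congrArg (Nat.cast : ℕ → ℝ) h
      push_cast [Nat.cast_sub (by omega : 2 ≤ N), Nat.cast_sub (by omega : 2 ≤ m),
        Nat.cast_sub (by omega : 3 ≤ N)] at hcast
      linarith [hcast]
    · interval_cases m <;> simp [hc] <;> ring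
  have v1 : c 1 = C * m / N := (eq_div_iff hN0).2 hc1v
  have v2 : c 2 = C * ((m:ℝ) * ((m:ℝ) - 1)) / ((N:ℝ) * ((N:ℝ) - 1)) := by
    rw [eq_div_iff (mul_ne_zero hN0 hN1)]
    linear_combination (N:ℝ) * hc2v + ((m:ℝ) - 1) * hc1v
  have v3 : c 3 = C * ((m:ℝ) * ((m:ℝ) - 1) * ((m:ℝ) - 2)) /
      ((N:ℝ) * ((N:ℝ) - 1) * ((N:ℝ) - 2)) := by
    rw [eq_div_iff (mul_ne_zero (mul_ne_zero hN0 hN1) hN2)]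
    linear_combination ((N:ℝ) * ((N:ℝ) - 1)) * hc3v + (((m:ℝ) - 2) * (N:ℝ)) * hc2v +
      (((m:ℝ) - 1) * ((m:ℝ) - 2)) * hc1v
  rw [hmean, hsq, v1, v2, v3]
  field_simp
  ring
end

section
/- Let a subset S of size m be chosen uniformly at random from {1,…,N} with N ≥ 4 and m ≤ N, and let I_j indicate j ∈ S. Then for 1 ≤ i < l ≤ N, E[P@i·I_i · P@l·I_l] = (m(m−1)/(N(N−1)))·(1/(i·l))·( 2 + (3i−5+l)·(m−2)/(N−2) + (i−1)(l−3)·(m−2)(m−3)/((N−2)(N−3)) ), where P@i = (1/i) ∑_{j=1}^{i} I_j. -/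
open Finset

lemma card_supersets {α : Type*} [DecidableEq α] (U T : Finset α) (hTU : T ⊆ U) (m : ℕ)
    (hm : T.card ≤ m) :
    ((U.powersetCard m).filter (fun S => T ⊆ S)).card = (U.card - T.card).choose (m - T.card) := by
  rw [← card_sdiff_of_subset hTU, ← card_powersetCard]
  apply card_nbij' (fun S => S \ T) (fun S => S ∪ T)
  · intro S hS
    simp only [mem_coe, mem_filter, mem_powersetCard] at hS
    obtain ⟨⟨hSU, hSc⟩, hTS⟩ := hS
    rw [mem_coe, mem_powersetCard]
    exact ⟨sdiff_subset_sdiff hSU (Finset.Subset.refl T), by rw [card_sdiff_of_subset hTS, hSc]⟩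
  · intro S hS
    rw [mem_coe, mem_powersetCard] at hS
    obtain ⟨hS1, hS2⟩ := hS
    have hd : Disjoint S T := disjoint_of_subset_left hS1 sdiff_disjoint
    simp only [mem_coe, mem_filter, mem_powersetCard]
    refine ⟨⟨union_subset (hS1.trans (sdiff_subset)) hTU, ?_⟩, subset_union_right⟩
    rw [card_union_of_disjoint hd, hS2, Nat.sub_add_cancel hm]
  · intro S hS
    simp only [mem_coe, mem_filter] at hS
    exact sdiff_union_of_subset hS.2
  · intro S hS
    rw [mem_coe, mem_powersetCard] at hS
    have hd : Disjoint S T := disjoint_of_subset_left hS.1 sdiff_disjoint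
    beta_reduce
    rw [union_sdiff_right, sdiff_eq_self_of_disjoint hd]

lemma card_supersets_zero {α : Type*} [DecidableEq α] (U T : Finset α) (m : ℕ)
    (hm : m < T.card) :
    ((U.powersetCard m).filter (fun S => T ⊆ S)) = ∅ := by
  rw [filter_eq_empty_iff]
  intro S hS hTS
  rw [mem_powersetCard] at hS
  have := card_le_card hTS
  omega

lemma prod_helper {α β : Type*} (s : Finset α) (t : Finset β) (f : α → ℝ) (g : β → ℝ)
    (b d x y : ℝ) :
    ((x * ∑ j ∈ s, f j) * b) * ((y * ∑ r ∈ t, g r) * d) =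
      x * y * ∑ j ∈ s, ∑ r ∈ t, f j * g r * (b * d) := by
  calc ((x * ∑ j ∈ s, f j) * b) * ((y * ∑ r ∈ t, g r) * d)
      = x * y * ((∑ j ∈ s, ∑ r ∈ t, f j * g r) * (b * d)) := by
        rw [← sum_mul_sum]; ring
    _ = x * y * ∑ j ∈ s, ∑ r ∈ t, f j * g r * (b * d) := by
        rw [sum_mul]; simp_rw [sum_mul]

lemma choose_step_s15 (n k : ℕ) (h1 : 1 ≤ k) (hkn : k ≤ n) :
    n.choose k * k = n * ((n - 1).choose (k - 1)) := by
  obtain ⟨n', rfl⟩ : ∃ n', n = n' + 1 := ⟨n - 1, by omega⟩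
  obtain ⟨k', rfl⟩ : ∃ k', k = k' + 1 := ⟨k - 1, by omega⟩
  simp only [Nat.add_sub_cancel]
  rw [← Nat.add_one_mul_choose_eq]

set_option maxHeartbeats 1000000 in
theorem cross_moment_without_replacement
    (N m : ℕ) (hm2 : 2 ≤ m) (hmN : m ≤ N) (hN : 4 ≤ N)
    (i l : ℕ) (hi1 : 1 ≤ i) (hil : i < l) (hlN : l ≤ N) :
    (1 / (N.choose m : ℝ)) * ∑ S ∈ (Icc 1 N).powersetCard m,
        (((1 / (i : ℝ)) * ∑ j ∈ Icc 1 i, (if j ∈ S then (1 : ℝ) else 0)) *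
          (if i ∈ S then (1 : ℝ) else 0)) *
        (((1 / (l : ℝ)) * ∑ r ∈ Icc 1 l, (if r ∈ S then (1 : ℝ) else 0)) *
          (if l ∈ S then (1 : ℝ) else 0)) =
      ((m : ℝ) * ((m : ℝ) - 1) / ((N : ℝ) * ((N : ℝ) - 1))) * (1 / ((i : ℝ) * l)) *
        (2 + (3 * (i : ℝ) - 5 + (l : ℝ)) * ((m : ℝ) - 2) / ((N : ℝ) - 2) +
          ((i : ℝ) - 1) * ((l : ℝ) - 3) * (((m : ℝ) - 2) * ((m : ℝ) - 3)) /
            (((N : ℝ) - 2) * ((N : ℝ) - 3))) := by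
  have hine : i ≠ l := Nat.ne_of_lt hil
  have hl2 : 2 ≤ l := by omega
  have hiN : i ≤ N := by omega
  have hU : (Icc 1 N).card = N := by rw [Nat.card_Icc]; omega
  set P := (Icc 1 N).powersetCard m with hPdef
  set e2 : ℝ := (((N - 2).choose (m - 2) : ℕ) : ℝ) with he2def
  set e3 : ℝ := if 3 ≤ m then (((N - 3).choose (m - 3) : ℕ) : ℝ) else 0 with he3def
  set e4 : ℝ := if 4 ≤ m then (((N - 4).choose (m - 4) : ℕ) : ℝ) else 0 with he4def
  have h2 : ∀ T : Finset ℕ, T ⊆ Icc 1 N → T.card = 2 →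
      ((P.filter (fun S => T ⊆ S)).card : ℝ) = e2 := by
    intro T hT hc
    rw [hPdef, card_supersets _ _ hT m (by omega), hU, hc, he2def]
  have h3 : ∀ T : Finset ℕ, T ⊆ Icc 1 N → T.card = 3 →
      ((P.filter (fun S => T ⊆ S)).card : ℝ) = e3 := by
    intro T hT hc
    by_cases hm3 : 3 ≤ m
    · rw [hPdef, card_supersets _ _ hT m (by omega), hU, hc, he3def, if_pos hm3]
    · rw [hPdef, card_supersets_zero _ _ m (by omega), he3def, if_neg hm3]; simp
  have h4 : ∀ T : Finset ℕ, T ⊆ Icc 1 N → T.card = 4 →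
      ((P.filter (fun S => T ⊆ S)).card : ℝ) = e4 := by
    intro T hT hc
    by_cases hm4 : 4 ≤ m
    · rw [hPdef, card_supersets _ _ hT m (by omega), hU, hc, he4def, if_pos hm4]
    · rw [hPdef, card_supersets_zero _ _ m (by omega), he4def, if_neg hm4]; simp
  -- Step A: rewrite the sum
  have keyA : ∑ S ∈ P,
        (((1 / (i : ℝ)) * ∑ j ∈ Icc 1 i, (if j ∈ S then (1 : ℝ) else 0)) *
          (if i ∈ S then (1 : ℝ) else 0)) *
        (((1 / (l : ℝ)) * ∑ r ∈ Icc 1 l, (if r ∈ S then (1 : ℝ) else 0)) *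
          (if l ∈ S then (1 : ℝ) else 0)) =
      (1 / (i : ℝ)) * (1 / (l : ℝ)) * ∑ j ∈ Icc 1 i, ∑ r ∈ Icc 1 l,
        ((P.filter (fun S => ({j, i, r, l} : Finset ℕ) ⊆ S)).card : ℝ) := by
    have hpt : ∀ (j r : ℕ) (S : Finset ℕ),
        (if j ∈ S then (1 : ℝ) else 0) * (if r ∈ S then (1 : ℝ) else 0) *
          ((if i ∈ S then (1 : ℝ) else 0) * (if l ∈ S then (1 : ℝ) else 0)) =
        (if ({j, i, r, l} : Finset ℕ) ⊆ S then (1 : ℝ) else 0) := by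
      intro j r S
      simp only [insert_subset_iff, singleton_subset_iff]
      by_cases h1 : j ∈ S <;> by_cases h2' : i ∈ S <;> by_cases h3' : r ∈ S <;>
        by_cases h4' : l ∈ S <;> simp [h1, h2', h3', h4']
    calc ∑ S ∈ P,
        (((1 / (i : ℝ)) * ∑ j ∈ Icc 1 i, (if j ∈ S then (1 : ℝ) else 0)) *
          (if i ∈ S then (1 : ℝ) else 0)) *
        (((1 / (l : ℝ)) * ∑ r ∈ Icc 1 l, (if r ∈ S then (1 : ℝ) else 0)) *
          (if l ∈ S then (1 : ℝ) else 0))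
        = ∑ S ∈ P, (1 / (i : ℝ)) * (1 / (l : ℝ)) * ∑ j ∈ Icc 1 i, ∑ r ∈ Icc 1 l,
            (if ({j, i, r, l} : Finset ℕ) ⊆ S then (1 : ℝ) else 0) := by
          refine sum_congr rfl fun S _ => ?_
          rw [prod_helper]
          congr 1
          exact sum_congr rfl fun j _ => sum_congr rfl fun r _ => hpt j r S
      _ = (1 / (i : ℝ)) * (1 / (l : ℝ)) * ∑ j ∈ Icc 1 i, ∑ r ∈ Icc 1 l, ∑ S ∈ P,
            (if ({j, i, r, l} : Finset ℕ) ⊆ S then (1 : ℝ) else 0) := by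
          rw [← mul_sum, sum_comm]
          congr 1
          exact sum_congr rfl fun j _ => sum_comm
      _ = (1 / (i : ℝ)) * (1 / (l : ℝ)) * ∑ j ∈ Icc 1 i, ∑ r ∈ Icc 1 l,
            ((P.filter (fun S => ({j, i, r, l} : Finset ℕ) ⊆ S)).card : ℝ) := by
          simp_rw [sum_boole]
  -- Step B: inner sums
  have hsub_il : ({i, l} : Finset ℕ) ⊆ Icc 1 l := by
    simp only [insert_subset_iff, singleton_subset_iff, mem_Icc]; omega
  have hinner_i : ∑ r ∈ Icc 1 l,
        ((P.filter (fun S => ({i, i, r, l} : Finset ℕ) ⊆ S)).card : ℝ) =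
      2 * e2 + ((l : ℝ) - 2) * e3 := by
    rw [← sum_sdiff hsub_il]
    have hc1 : ∑ r ∈ ({i, l} : Finset ℕ),
        ((P.filter (fun S => ({i, i, r, l} : Finset ℕ) ⊆ S)).card : ℝ) = 2 * e2 := by
      rw [sum_pair hine]
      have hA : ({i, i, i, l} : Finset ℕ) = {i, l} := by ext x; simp; try tauto
      have hB : ({i, i, l, l} : Finset ℕ) = {i, l} := by ext x; simp; try tauto
      have hsub : ({i, l} : Finset ℕ) ⊆ Icc 1 N := by
        simp only [insert_subset_iff, singleton_subset_iff, mem_Icc]; omega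
      rw [hA, hB, h2 {i, l} hsub (card_pair hine)]
      ring
    have hc2 : ∑ r ∈ Icc 1 l \ {i, l},
        ((P.filter (fun S => ({i, i, r, l} : Finset ℕ) ⊆ S)).card : ℝ) =
        ((l : ℝ) - 2) * e3 := by
      have hval : ∀ r ∈ Icc 1 l \ {i, l},
          ((P.filter (fun S => ({i, i, r, l} : Finset ℕ) ⊆ S)).card : ℝ) = e3 := by
        intro r hr
        simp only [mem_sdiff, mem_Icc, mem_insert, mem_singleton, not_or] at hr
        obtain ⟨⟨hr1, hr2⟩, hri, hrl⟩ := hr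
        have hE : ({i, i, r, l} : Finset ℕ) = {i, r, l} := by ext x; simp; try tauto
        rw [hE]
        apply h3
        · simp only [insert_subset_iff, singleton_subset_iff, mem_Icc]; omega
        · have h1 : i ∉ ({r, l} : Finset ℕ) := by simp; omega
          rw [card_insert_of_notMem h1, card_pair hrl]
      rw [sum_congr rfl hval, sum_const, card_sdiff_of_subset hsub_il, card_pair hine, Nat.card_Icc,
        nsmul_eq_mul]
      have he : l + 1 - 1 - 2 = l - 2 := by omega
      rw [he, Nat.cast_sub hl2]
      norm_num
    rw [hc1, hc2]
    ring
  have hinner_j : ∀ j, 1 ≤ j → j < i → ∑ r ∈ Icc 1 l,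
        ((P.filter (fun S => ({j, i, r, l} : Finset ℕ) ⊆ S)).card : ℝ) =
      3 * e3 + ((l : ℝ) - 3) * e4 := by
    intro j hj1 hji
    have hji' : j ≠ i := by omega
    have hjl : j ≠ l := by omega
    have hl3 : 3 ≤ l := by omega
    have hsub3 : ({j, i, l} : Finset ℕ) ⊆ Icc 1 l := by
      simp only [insert_subset_iff, singleton_subset_iff, mem_Icc]; omega
    have hsub3' : ({j, i, l} : Finset ℕ) ⊆ Icc 1 N := by
      simp only [insert_subset_iff, singleton_subset_iff, mem_Icc]; omega
    have hcard3 : ({j, i, l} : Finset ℕ).card = 3 := by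
      have h1 : j ∉ ({i, l} : Finset ℕ) := by simp; omega
      rw [card_insert_of_notMem h1, card_pair hine]
    rw [← sum_sdiff hsub3]
    have hc1 : ∑ r ∈ ({j, i, l} : Finset ℕ),
        ((P.filter (fun S => ({j, i, r, l} : Finset ℕ) ⊆ S)).card : ℝ) = 3 * e3 := by
      have hnm : j ∉ ({i, l} : Finset ℕ) := by simp; omega
      rw [sum_insert hnm, sum_pair hine]
      have hA : ({j, i, j, l} : Finset ℕ) = {j, i, l} := by ext x; simp; try tauto
      have hB : ({j, i, i, l} : Finset ℕ) = {j, i, l} := by ext x; simp; try tauto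
      have hC : ({j, i, l, l} : Finset ℕ) = {j, i, l} := by ext x; simp; try tauto
      rw [hA, hB, hC, h3 {j, i, l} hsub3' hcard3]
      ring
    have hc2 : ∑ r ∈ Icc 1 l \ {j, i, l},
        ((P.filter (fun S => ({j, i, r, l} : Finset ℕ) ⊆ S)).card : ℝ) =
        ((l : ℝ) - 3) * e4 := by
      have hval : ∀ r ∈ Icc 1 l \ {j, i, l},
          ((P.filter (fun S => ({j, i, r, l} : Finset ℕ) ⊆ S)).card : ℝ) = e4 := by
        intro r hr
        simp only [mem_sdiff, mem_Icc, mem_insert, mem_singleton, not_or] at hr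
        obtain ⟨⟨hr1, hr2⟩, hrj, hri, hrl⟩ := hr
        apply h4
        · simp only [insert_subset_iff, singleton_subset_iff, mem_Icc]; omega
        · have h1 : j ∉ ({i, r, l} : Finset ℕ) := by simp; omega
          have h2' : i ∉ ({r, l} : Finset ℕ) := by simp; omega
          rw [card_insert_of_notMem h1, card_insert_of_notMem h2',
            card_pair (show r ≠ l by omega)]
      rw [sum_congr rfl hval, sum_const, card_sdiff_of_subset hsub3, hcard3, Nat.card_Icc, nsmul_eq_mul]
      have he : l + 1 - 1 - 3 = l - 3 := by omega
      rw [he, Nat.cast_sub hl3]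
      norm_num
    rw [hc1, hc2]
    ring
  -- outer sum
  have hsub_i : ({i} : Finset ℕ) ⊆ Icc 1 i := by
    simp only [singleton_subset_iff, mem_Icc]; omega
  have houter : ∑ j ∈ Icc 1 i, ∑ r ∈ Icc 1 l,
        ((P.filter (fun S => ({j, i, r, l} : Finset ℕ) ⊆ S)).card : ℝ) =
      (2 * e2 + ((l : ℝ) - 2) * e3) + ((i : ℝ) - 1) * (3 * e3 + ((l : ℝ) - 3) * e4) := by
    rw [← sum_sdiff hsub_i, sum_singleton, hinner_i]
    have hval : ∀ j ∈ Icc 1 i \ {i}, ∑ r ∈ Icc 1 l,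
        ((P.filter (fun S => ({j, i, r, l} : Finset ℕ) ⊆ S)).card : ℝ) =
        3 * e3 + ((l : ℝ) - 3) * e4 := by
      intro j hj
      simp only [mem_sdiff, mem_Icc, mem_singleton] at hj
      exact hinner_j j hj.1.1 (by omega)
    rw [sum_congr rfl hval, sum_const, card_sdiff_of_subset hsub_i, card_singleton, Nat.card_Icc,
      nsmul_eq_mul]
    have he : i + 1 - 1 - 1 = i - 1 := by omega
    rw [he, Nat.cast_sub hi1]
    norm_num
    ring
  -- choose ratio identities
  have hCpos : 0 < N.choose m := Nat.choose_pos hmN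
  have hCne : ((N.choose m : ℕ) : ℝ) ≠ 0 := Nat.cast_ne_zero.mpr hCpos.ne'
  have hNr : (4 : ℝ) ≤ (N : ℝ) := by exact_mod_cast hN
  have hN0 : (N : ℝ) ≠ 0 := by linarith
  have hN1 : (N : ℝ) - 1 ≠ 0 := by intro h; nlinarith
  have hN2 : (N : ℝ) - 2 ≠ 0 := by intro h; nlinarith
  have hN3 : (N : ℝ) - 3 ≠ 0 := by intro h; nlinarith
  have hi0 : (i : ℝ) ≠ 0 := by
    have : (0 : ℝ) < i := by exact_mod_cast hi1
    linarith
  have hl0 : (l : ℝ) ≠ 0 := by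
    have : (0 : ℝ) < l := by exact_mod_cast (show 0 < l by omega)
    linarith
  have E2 : e2 * ((N : ℝ) * ((N : ℝ) - 1)) =
      ((N.choose m : ℕ) : ℝ) * ((m : ℝ) * ((m : ℝ) - 1)) := by
    have s1 := choose_step_s15 N m (by omega) hmN
    have s2 := choose_step_s15 (N - 1) (m - 1) (by omega) (by omega)
    have hnat : N.choose m * (m * (m - 1)) = N * ((N - 1) * ((N - 2).choose (m - 2))) := by
      have h12 : N - 1 - 1 = N - 2 := by omega
      have h12' : m - 1 - 1 = m - 2 := by omega
      calc N.choose m * (m * (m - 1)) = (N.choose m * m) * (m - 1) := by ring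
        _ = N * ((N - 1).choose (m - 1) * (m - 1)) := by rw [s1]; ring
        _ = N * ((N - 1) * ((N - 2).choose (m - 2))) := by rw [s2, h12, h12']
    have hc := congrArg (fun t : ℕ => (t : ℝ)) hnat
    push_cast [Nat.cast_sub (show 1 ≤ m by omega), Nat.cast_sub (show 1 ≤ N by omega)] at hc
    rw [he2def]
    linear_combination -hc
  have E3 : e3 * ((N : ℝ) * ((N : ℝ) - 1) * ((N : ℝ) - 2)) =
      ((N.choose m : ℕ) : ℝ) * ((m : ℝ) * ((m : ℝ) - 1) * ((m : ℝ) - 2)) := by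
    by_cases hm3 : 3 ≤ m
    · have s1 := choose_step_s15 N m (by omega) hmN
      have s2 := choose_step_s15 (N - 1) (m - 1) (by omega) (by omega)
      have s3 := choose_step_s15 (N - 2) (m - 2) (by omega) (by omega)
      have hnat : N.choose m * (m * (m - 1) * (m - 2)) =
          N * ((N - 1) * ((N - 2) * ((N - 3).choose (m - 3)))) := by
        have e1 : N - 1 - 1 = N - 2 := by omega
        have e1' : m - 1 - 1 = m - 2 := by omega
        have e2' : N - 2 - 1 = N - 3 := by omega
        have e2'' : m - 2 - 1 = m - 3 := by omega
        calc N.choose m * (m * (m - 1) * (m - 2))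
            = ((N.choose m * m) * (m - 1)) * (m - 2) := by ring
          _ = (N * ((N - 1).choose (m - 1) * (m - 1))) * (m - 2) := by rw [s1]; ring
          _ = (N * ((N - 1) * ((N - 2).choose (m - 2)))) * (m - 2) := by rw [s2, e1, e1']
          _ = N * ((N - 1) * ((N - 2).choose (m - 2) * (m - 2))) := by ring
          _ = N * ((N - 1) * ((N - 2) * ((N - 3).choose (m - 3)))) := by rw [s3, e2', e2'']
      have hc := congrArg (fun t : ℕ => (t : ℝ)) hnat
      push_cast [Nat.cast_sub (show 1 ≤ m by omega), Nat.cast_sub (show 2 ≤ m by omega),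
        Nat.cast_sub (show 1 ≤ N by omega), Nat.cast_sub (show 2 ≤ N by omega)] at hc
      rw [he3def, if_pos hm3]
      linear_combination -hc
    · have hm2' : m = 2 := by omega
      rw [he3def, if_neg hm3, hm2']
      norm_num
  have E4 : e4 * ((N : ℝ) * ((N : ℝ) - 1) * ((N : ℝ) - 2) * ((N : ℝ) - 3)) =
      ((N.choose m : ℕ) : ℝ) * ((m : ℝ) * ((m : ℝ) - 1) * ((m : ℝ) - 2) * ((m : ℝ) - 3)) := by
    by_cases hm4 : 4 ≤ m
    · have s1 := choose_step_s15 N m (by omega) hmN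
      have s2 := choose_step_s15 (N - 1) (m - 1) (by omega) (by omega)
      have s3 := choose_step_s15 (N - 2) (m - 2) (by omega) (by omega)
      have s4 := choose_step_s15 (N - 3) (m - 3) (by omega) (by omega)
      have hnat : N.choose m * (m * (m - 1) * (m - 2) * (m - 3)) =
          N * ((N - 1) * ((N - 2) * ((N - 3) * ((N - 4).choose (m - 4))))) := by
        have e1 : N - 1 - 1 = N - 2 := by omega
        have e1' : m - 1 - 1 = m - 2 := by omega
        have e2' : N - 2 - 1 = N - 3 := by omega
        have e2'' : m - 2 - 1 = m - 3 := by omega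
        have e3' : N - 3 - 1 = N - 4 := by omega
        have e3'' : m - 3 - 1 = m - 4 := by omega
        calc N.choose m * (m * (m - 1) * (m - 2) * (m - 3))
            = (((N.choose m * m) * (m - 1)) * (m - 2)) * (m - 3) := by ring
          _ = ((N * ((N - 1).choose (m - 1) * (m - 1))) * (m - 2)) * (m - 3) := by
              rw [s1]; ring
          _ = ((N * ((N - 1) * ((N - 2).choose (m - 2)))) * (m - 2)) * (m - 3) := by
              rw [s2, e1, e1']
          _ = (N * ((N - 1) * ((N - 2).choose (m - 2) * (m - 2)))) * (m - 3) := by ring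
          _ = (N * ((N - 1) * ((N - 2) * ((N - 3).choose (m - 3))))) * (m - 3) := by
              rw [s3, e2', e2'']
          _ = N * ((N - 1) * ((N - 2) * ((N - 3).choose (m - 3) * (m - 3)))) := by ring
          _ = N * ((N - 1) * ((N - 2) * ((N - 3) * ((N - 4).choose (m - 4))))) := by
              rw [s4, e3', e3'']
      have hc := congrArg (fun t : ℕ => (t : ℝ)) hnat
      push_cast [Nat.cast_sub (show 1 ≤ m by omega), Nat.cast_sub (show 2 ≤ m by omega),
        Nat.cast_sub (show 3 ≤ m by omega), Nat.cast_sub (show 1 ≤ N by omega),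
        Nat.cast_sub (show 2 ≤ N by omega), Nat.cast_sub (show 3 ≤ N by omega)] at hc
      rw [he4def, if_pos hm4]
      linear_combination -hc
    · rw [he4def, if_neg hm4]
      interval_cases m <;> norm_num
  -- finish
  rw [keyA, houter]
  have hv2 : e2 = ((N.choose m : ℕ) : ℝ) * ((m : ℝ) * ((m : ℝ) - 1)) /
      ((N : ℝ) * ((N : ℝ) - 1)) := by
    rw [eq_div_iff (by exact mul_ne_zero hN0 hN1)]; exact E2
  have hv3 : e3 = ((N.choose m : ℕ) : ℝ) * ((m : ℝ) * ((m : ℝ) - 1) * ((m : ℝ) - 2)) /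
      ((N : ℝ) * ((N : ℝ) - 1) * ((N : ℝ) - 2)) := by
    rw [eq_div_iff (by exact mul_ne_zero (mul_ne_zero hN0 hN1) hN2)]; exact E3
  have hv4 : e4 = ((N.choose m : ℕ) : ℝ) *
      ((m : ℝ) * ((m : ℝ) - 1) * ((m : ℝ) - 2) * ((m : ℝ) - 3)) /
      ((N : ℝ) * ((N : ℝ) - 1) * ((N : ℝ) - 2) * ((N : ℝ) - 3)) := by
    rw [eq_div_iff (by exact mul_ne_zero (mul_ne_zero (mul_ne_zero hN0 hN1) hN2) hN3)]; exact E4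
  rw [hv2, hv3, hv4]
  field_simp
  ring
end

section
/- Let I_1, …, I_N be i.i.d. Bernoulli(p) random variables with 0 ≤ p ≤ 1 and define AP@k = (1/k) ∑_{i=1}^{k} ((1/i) ∑_{j=1}^{i} I_j)·I_i for 1 ≤ k ≤ N. Then p² ≤ E[AP@k] ≤ p, i.e., the expected average precision under random Bernoulli relevance always lies between p² and p. -/
open Finset MeasureTheory ProbabilityTheory

theorem expectation_APk_bernoulli_bounds {Ω : Type*} [MeasurableSpace Ω] (μ : Measure Ω)
    [IsProbabilityMeasure μ] (N : ℕ) (p : ℝ) (hp0 : 0 ≤ p) (hp1 : p ≤ 1)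
    (I : ℕ → Ω → ℝ) (hmeas : ∀ j, Measurable (I j))
    (h01 : ∀ j ω, I j ω = 0 ∨ I j ω = 1)
    (hbern : ∀ j, μ {ω | I j ω = 1} = ENNReal.ofReal p)
    (hindep : iIndepFun I μ)
    (k : ℕ) (hk : 1 ≤ k) (hkN : k ≤ N) :
    p ^ 2 ≤ (∫ ω, (1 / (k : ℝ)) * ∑ i ∈ Icc 1 k,
        ((1 / (i : ℝ)) * ∑ j ∈ Icc 1 i, I j ω) * I i ω ∂μ) ∧
    (∫ ω, (1 / (k : ℝ)) * ∑ i ∈ Icc 1 k,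
        ((1 / (i : ℝ)) * ∑ j ∈ Icc 1 i, I j ω) * I i ω ∂μ) ≤ p := by
  have hms : ∀ j, MeasurableSet {ω | I j ω = 1} := fun j =>
    (hmeas j) (measurableSet_singleton 1)
  have hIeq : ∀ j, I j = Set.indicator {ω | I j ω = 1} (fun _ => (1:ℝ)) := by
    intro j; funext ω
    by_cases hmem : ω ∈ {ω | I j ω = 1}
    · rw [Set.indicator_of_mem hmem]; exact hmem
    · rw [Set.indicator_of_notMem hmem]
      rcases h01 j ω with h | h
      · exact h
      · exact absurd h hmem
  have hint : ∀ j, Integrable (I j) μ := by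
    intro j
    rw [hIeq j]
    exact (integrable_indicator_iff (hms j)).2
      (integrableOn_const (measure_lt_top _ _).ne)
  have hEI : ∀ j, ∫ ω, I j ω ∂μ = p := by
    intro j
    conv_lhs => rw [hIeq j]
    rw [integral_indicator_const _ (hms j), measureReal_def, hbern j]
    simp [ENNReal.toReal_ofReal hp0]
  have hbound : ∀ j ω, ‖I j ω‖ ≤ 1 := by
    intro j ω; rcases h01 j ω with h|h <;> simp [h]
  have hintmul : ∀ i j, Integrable (fun ω => I j ω * I i ω) μ := by
    intro i j
    exact (hint i).bdd_mul (hmeas j).aestronglyMeasurable (c := 1) (Filter.Eventually.of_forall fun ω => hbound j ω)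
  have hEmul : ∀ i j, j ≠ i → ∫ ω, I j ω * I i ω ∂μ = p * p := by
    intro i j hij
    have hind : IndepFun (I j) (I i) μ := hindep.indepFun hij
    have := hind.integral_mul_eq_mul_integral (hmeas j).aestronglyMeasurable (hmeas i).aestronglyMeasurable
    rw [show (fun ω => I j ω * I i ω) = I j * I i from rfl, this, hEI, hEI]
  have hEsq : ∀ i, ∫ ω, I i ω * I i ω ∂μ = p := by
    intro i
    have hsq : ∀ ω, I i ω * I i ω = I i ω := by
      intro ω; rcases h01 i ω with h|h <;> simp [h]
    simp_rw [hsq]; exact hEI i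
  have key : (∫ ω, (1 / (k : ℝ)) * ∑ i ∈ Icc 1 k,
        ((1 / (i : ℝ)) * ∑ j ∈ Icc 1 i, I j ω) * I i ω ∂μ)
      = (1/(k:ℝ)) * ∑ i ∈ Icc 1 k, (1/(i:ℝ)) * (p + ((i:ℝ)-1) * (p*p)) := by
    rw [integral_const_mul]
    congr 1
    rw [integral_finset_sum]
    · apply Finset.sum_congr rfl
      intro i hi
      have hi1 : 1 ≤ i := (mem_Icc.1 hi).1
      have hrw : (fun ω => ((1/(i:ℝ)) * ∑ j ∈ Icc 1 i, I j ω) * I i ω)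
           = fun ω => ∑ j ∈ Icc 1 i, (1/(i:ℝ)) * (I j ω * I i ω) := by
        funext ω
        rw [mul_assoc, Finset.sum_mul]
        simp_rw [Finset.mul_sum]
      rw [hrw, integral_finset_sum _ (fun j _ => (hintmul i j).const_mul _)]
      simp_rw [integral_const_mul]
      rw [← Finset.mul_sum]
      congr 1
      have hmem : i ∈ Icc 1 i := mem_Icc.2 ⟨hi1, le_refl i⟩
      rw [← Finset.add_sum_erase _ _ hmem, hEsq i]
      congr 1
      rw [Finset.sum_congr rfl (fun j hj => hEmul i j (Finset.ne_of_mem_erase hj)),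
        Finset.sum_const, nsmul_eq_mul, Finset.card_erase_of_mem hmem, Nat.card_Icc]
      have : ((i + 1 - 1 - 1 : ℕ) : ℝ) = (i:ℝ) - 1 := by
        have : i + 1 - 1 - 1 = i - 1 := rfl
        rw [this, Nat.cast_sub hi1]; norm_num
      rw [this]
    · intro i hi
      have : Integrable (fun ω => ∑ j ∈ Icc 1 i, (1/(i:ℝ)) * (I j ω * I i ω)) μ :=
        integrable_finset_sum _ (fun j _ => (hintmul i j).const_mul _)
      apply this.congr
      filter_upwards with ω
      rw [mul_assoc, Finset.sum_mul]
      simp_rw [Finset.mul_sum]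
  have hk0 : (0:ℝ) < (k:ℝ) := by exact_mod_cast hk
  rw [key]
  constructor
  · have hterm : ∀ i ∈ Icc 1 k, p ^ 2 ≤ (1/(i:ℝ)) * (p + ((i:ℝ)-1) * (p*p)) := by
      intro i hi
      have hi1 : (1:ℝ) ≤ (i:ℝ) := by exact_mod_cast (mem_Icc.1 hi).1
      have hi0 : (0:ℝ) < (i:ℝ) := lt_of_lt_of_le one_pos hi1
      rw [one_div, inv_mul_eq_div, le_div_iff₀ hi0]
      nlinarith [mul_nonneg hp0 hp0]
    have := Finset.sum_le_sum hterm
    rw [Finset.sum_const, Nat.card_Icc, nsmul_eq_mul] at this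
    have hcard : ((k + 1 - 1 : ℕ) : ℝ) = (k:ℝ) := by norm_num
    rw [hcard] at this
    calc p ^ 2 = (1/(k:ℝ)) * ((k:ℝ) * p ^ 2) := by field_simp
    _ ≤ _ := by
      apply mul_le_mul_of_nonneg_left this (by positivity)
  · have hterm : ∀ i ∈ Icc 1 k, (1/(i:ℝ)) * (p + ((i:ℝ)-1) * (p*p)) ≤ p := by
      intro i hi
      have hi1 : (1:ℝ) ≤ (i:ℝ) := by exact_mod_cast (mem_Icc.1 hi).1
      have hi0 : (0:ℝ) < (i:ℝ) := lt_of_lt_of_le one_pos hi1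
      rw [one_div, inv_mul_eq_div, div_le_iff₀ hi0]
      nlinarith [mul_nonneg (sub_nonneg.2 hi1) (mul_nonneg hp0 (sub_nonneg.2 hp1))]
    have := Finset.sum_le_sum hterm
    rw [Finset.sum_const, Nat.card_Icc, nsmul_eq_mul] at this
    have hcard : ((k + 1 - 1 : ℕ) : ℝ) = (k:ℝ) := by norm_num
    rw [hcard] at this
    calc (1/(k:ℝ)) * ∑ i ∈ Icc 1 k, (1/(i:ℝ)) * (p + ((i:ℝ)-1) * (p*p))
        ≤ (1/(k:ℝ)) * ((k:ℝ) * p) := mul_le_mul_of_nonneg_left this (by positivity)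
    _ = p := by field_simp
end
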